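/- arXiv:1401.3124 — 9 statements merged into one kernel-verified Lean document; each statement's English description precedes it below -/
import Mathlib

section
/- Let h be an even positive integer and c ∈ ℝ with c ≠ 0. If φ : ℝ → ℂ is differentiable, satisfies φ'(t) = −c·tʰ·φ(t) for all t ∈ ℝ, and φ ∈ L²(ℝ), then φ is identically zero. Equivalently, for h even and c ≠ 0 the function t ↦ exp(−c·t^(h+1)/(h+1)) does not belong to L²(ℝ). -/
/-!
Every solution of `φ' = -c tʰ φ` is `φ 0 · exp g` with `g t = -c t^(h+1)/(h+1)`. Since `h + 1` is
odd, `-c t^(h+1) ≥ 0` on one of the half-lines `t ≥ 0`, `t ≤ 0`, so `|exp g| ≥ 1` on a set of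
infinite measure; a function bounded below by a positive constant there is not in `L²`.
-/

open MeasureTheory

open scoped ENNReal in
theorem not_memLp_of_le_norm_on {α E : Type*} [MeasurableSpace α] [NormedAddCommGroup E]
    {μ : Measure α} {p : ℝ≥0∞} (hp₀ : p ≠ 0) (hp : p ≠ ∞) {f : α → E} {ε : ℝ} (hε : 0 < ε)
    {S : Set α} (hS : μ S = ∞) (hf : ∀ x ∈ S, ε ≤ ‖f x‖) : ¬ MemLp f p μ := by
  intro hmem
  refine (hmem.meas_ge_lt_top hp₀ hp (Real.toNNReal_pos.2 hε).ne').ne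
    (top_unique (hS ▸ measure_mono fun x hx => ?_))
  exact Real.toNNReal_le_iff_le_coe.2 (hf x hx)

theorem hasDerivAt_mul_pow_succ_div (a : ℂ) (n : ℕ) (t : ℝ) :
    HasDerivAt (fun t : ℝ => a * (t : ℂ) ^ (n + 1) / ((n : ℂ) + 1)) (a * (t : ℂ) ^ n) t := by
  have hn : (n : ℂ) + 1 ≠ 0 := by exact_mod_cast n.succ_ne_zero
  have hz : HasDerivAt (fun z : ℂ => a * z ^ (n + 1) / ((n : ℂ) + 1))
      (a * ((n + 1 : ℕ) * (t : ℂ) ^ n) / ((n : ℂ) + 1)) t := by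
    simpa using (((hasDerivAt_id (t : ℂ)).pow (n + 1)).const_mul a).div_const ((n : ℂ) + 1)
  convert hz.comp_ofReal using 1
  field_simp
  push_cast
  ring

theorem eq_mul_exp_sub_of_deriv_eq_mul {φ g g' : ℝ → ℂ} (hg : ∀ t, HasDerivAt g (g' t) t)
    (hφ : Differentiable ℝ φ) (hφ' : ∀ t, deriv φ t = g' t * φ t) (t s : ℝ) :
    φ t = φ s * Complex.exp (g t - g s) := by
  have hψ : ∀ r, HasDerivAt (fun r => φ r * Complex.exp (-g r)) 0 r := fun r => by
    refine ((hφ' r ▸ (hφ r).hasDerivAt).mul (hg r).neg.cexp).congr_deriv ?_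
    simp only [Pi.neg_apply]
    ring
  have hconst := is_const_of_deriv_eq_zero (fun r => (hψ r).differentiableAt)
    (fun r => (hψ r).deriv) t s
  calc φ t = φ t * Complex.exp (-g t) * Complex.exp (g t) := by
        rw [mul_assoc, ← Complex.exp_add, neg_add_cancel, Complex.exp_zero, mul_one]
    _ = φ s * Complex.exp (g t - g s) := by
        rw [hconst, mul_assoc, ← Complex.exp_add, neg_add_eq_sub]

theorem exists_volume_eq_top_forall_nonneg_mul_pow {n : ℕ} (hn : Odd n) (a : ℝ) :
    ∃ S : Set ℝ, volume S = ⊤ ∧ ∀ t ∈ S, 0 ≤ a * t ^ n := by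
  rcases le_total 0 a with ha | ha
  · exact ⟨Set.Ici 0, Real.volume_Ici, fun t ht => mul_nonneg ha (pow_nonneg ht n)⟩
  · exact ⟨Set.Iic 0, Real.volume_Iic,
      fun t ht => mul_nonneg_of_nonpos_of_nonpos ha (hn.pow_nonpos ht)⟩

theorem stmt_2_general (h : ℕ) (heven : Even h) (c : ℝ) :
    (∀ φ : ℝ → ℂ, Differentiable ℝ φ →
        (∀ t : ℝ, deriv φ t = -(c : ℂ) * (t : ℂ) ^ h * φ t) →
        MemLp φ 2 volume → ∀ t : ℝ, φ t = 0) ∧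
      ¬ MemLp (fun t : ℝ => Complex.exp (-(c : ℂ) * (t : ℂ) ^ (h + 1) / ((h : ℂ) + 1)))
          2 volume := by
  set g : ℝ → ℂ := fun t => -(c : ℂ) * (t : ℂ) ^ (h + 1) / ((h : ℂ) + 1)
  have hg : ∀ t : ℝ, HasDerivAt g (-(c : ℂ) * (t : ℂ) ^ h) t := hasDerivAt_mul_pow_succ_div _ h
  obtain ⟨S, hS, hcS⟩ := exists_volume_eq_top_forall_nonneg_mul_pow heven.add_one (-c)
  have hgS : ∀ t ∈ S, 1 ≤ ‖Complex.exp (g t)‖ := fun t ht => by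
    have hgt : g t = ((-c * t ^ (h + 1) / (h + 1) : ℝ) : ℂ) := by push_cast [g]; ring
    rw [hgt, Complex.norm_exp_ofReal]
    exact Real.one_le_exp (div_nonneg (hcS t ht) (by positivity))
  refine ⟨fun φ hφ hφ' hmem t => ?_,
    not_memLp_of_le_norm_on two_ne_zero ENNReal.ofNat_ne_top one_pos hS hgS⟩
  have hφg : ∀ s, φ s = φ 0 * Complex.exp (g s) := fun s => by
    simpa [g] using eq_mul_exp_sub_of_deriv_eq_mul hg hφ hφ' s 0
  suffices h0 : φ 0 = 0 by rw [hφg t, h0, zero_mul]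
  by_contra h0
  refine not_memLp_of_le_norm_on two_ne_zero ENNReal.ofNat_ne_top (norm_pos_iff.2 h0) hS
    (fun s hs => ?_) hmem
  rw [hφg s, norm_mul]
  exact le_mul_of_one_le_right (norm_nonneg _) (hgS s hs)

/-- Let `h` be an even positive integer and `c ∈ ℝ` with `c ≠ 0`. If `φ : ℝ → ℂ`
is differentiable, satisfies `φ'(t) = −c·tʰ·φ(t)` for all `t ∈ ℝ`, and `φ ∈ L²(ℝ)`, then `φ`
is identically zero. Equivalently, for `h` even and `c ≠ 0` the function
`t ↦ exp(−c·t^(h+1)/(h+1))` does not belong to `L²(ℝ)`. -/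
theorem stmt_2 (h : ℕ) (heven : Even h) (hpos : 0 < h) (c : ℝ) (hc : c ≠ 0) :
    (∀ φ : ℝ → ℂ, Differentiable ℝ φ →
        (∀ t : ℝ, deriv φ t = -(c : ℂ) * (t : ℂ) ^ h * φ t) →
        MemLp φ 2 volume → ∀ t : ℝ, φ t = 0) ∧
      ¬ MemLp (fun t : ℝ => Complex.exp (-(c : ℂ) * (t : ℂ) ^ (h + 1) / ((h : ℂ) + 1)))
          2 volume :=
  stmt_2_general h heven c
end

section
/- Let k₁, k₂ ≥ 1 be integers and ξ ∈ ℝ with ξ ≠ 0. If u ∈ 𝒮(ℝ) satisfies −u''(t) + ξ²·(t^(2k₁) + t^(2k₂))·u(t) − k₁·ξ·t^(k₁−1)·u(t) = 0 for all t ∈ ℝ, then u = 0. -/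
/-!
Write the operator as the square of a first-order operator twisted by `w t = ξ t ^ k₁`: with
`v = u' + w u` the equation reads `v' = w v + q u`, `q t = ξ² t ^ (2 k₂)`. The "energy"
`E = ⟪v, u⟫_ℝ` then has derivative `‖v‖² + q ‖u‖² ≥ 0`, the cross terms `± w ⟪v, u⟫` cancelling.
So `E` is monotone, and it vanishes at `±∞` because `u` and `v` are Schwartz functions; hence `E`
is identically zero, so is its derivative, and `u` vanishes wherever `q > 0`, i.e. off `t = 0`.
-/

open Filter Topology RealInnerProductSpace

theorem Monotone.eq_of_tendsto_atBot_atTop {α β : Type*} [TopologicalSpace α] [PartialOrder α]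
    [OrderClosedTopology α] [Preorder β] [IsDirectedOrder β] [IsCodirectedOrder β] {f : β → α}
    {a : α} (hf : Monotone f) (hbot : Tendsto f atBot (𝓝 a)) (htop : Tendsto f atTop (𝓝 a))
    (b : β) : f b = a :=
  le_antisymm (hf.ge_of_tendsto htop b) (hf.le_of_tendsto hbot b)

section

variable {H : Type*} [NormedAddCommGroup H] [InnerProductSpace ℝ H]

theorem hasDerivAt_inner_add_smul_self {u u' : ℝ → H} {w : ℝ → ℝ} {u'' : H} {w' q t : ℝ}
    (hu : HasDerivAt u (u' t) t) (hu' : HasDerivAt u' u'' t) (hw : HasDerivAt w w' t)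
    (hode : u'' = (w t ^ 2 + q - w') • u t) :
    HasDerivAt (fun s => ⟪u' s + w s • u s, u s⟫)
      (‖u' t + w t • u t‖ ^ 2 + q * ‖u t‖ ^ 2) t := by
  set v := u' t + w t • u t
  have hv : HasDerivAt (fun s => u' s + w s • u s) (w t • v + q • u t) t := by
    refine (hu'.add (hw.fun_smul hu)).congr_deriv ?_
    rw [hode]
    simp only [v, smul_add, add_smul, sub_smul, pow_two, mul_smul]
    abel
  refine (hv.inner ℝ hu).congr_deriv ?_
  simp only [v, ← real_inner_self_eq_norm_sq, inner_add_left, inner_add_right,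
    real_inner_smul_left, real_inner_smul_right, real_inner_comm (u t) (u' t)]
  ring

namespace SchwartzMap

theorem eq_zero_of_deriv_deriv_eq_smul {u : 𝓢(ℝ, H)} {w q : ℝ → ℝ}
    (hw : w.HasTemperateGrowth) (hq : ∀ t, 0 ≤ q t) (hq_pos : Dense {t | 0 < q t})
    (hu : ∀ t, deriv (deriv u) t = (w t ^ 2 + q t - deriv w t) • u t) : u = 0 := by
  set v : 𝓢(ℝ, H) := derivCLM ℝ H u + smulLeftCLM H w u
  have hv (t : ℝ) : v t = deriv u t + w t • u t := by simp [v, hw]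
  set E := fun t => ⟪v t, u t⟫
  have hE (t : ℝ) : HasDerivAt E (‖v t‖ ^ 2 + q t * ‖u t‖ ^ 2) t := by
    simp only [E, hv]
    exact hasDerivAt_inner_add_smul_self (u.hasDerivAt t) ((derivCLM ℝ H u).hasDerivAt t)
      (hw.1.differentiable (by simp) t).hasDerivAt (hu t)
  have hE_mono : Monotone E :=
    monotone_of_hasDerivAt_nonneg hE fun t => by have := hq t; positivity
  have hE_lim : Tendsto E (cocompact ℝ) (𝓝 0) := by
    simpa using v.tendsto_cocompact.inner (𝕜 := ℝ) u.tendsto_cocompact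
  have hE_zero : E = 0 := funext <| hE_mono.eq_of_tendsto_atBot_atTop
    (hE_lim.mono_left atBot_le_cocompact) (hE_lim.mono_left atTop_le_cocompact)
  have hE'_zero (t : ℝ) : ‖v t‖ ^ 2 + q t * ‖u t‖ ^ 2 = 0 :=
    (hE t).unique (by simp [hE_zero])
  ext1 t
  refine congrFun (u.continuous.ext_on hq_pos continuous_const fun t (ht : 0 < q t) => ?_) t
  have hqu : q t * ‖u t‖ ^ 2 = 0 :=
    ((add_eq_zero_iff_of_nonneg (sq_nonneg _) (by positivity)).1 (hE'_zero t)).2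
  simpa [ht.ne'] using hqu

end SchwartzMap

end

theorem stmt_4_general (k₁ k₂ : ℕ) (ξ : ℝ) (hξ : ξ ≠ 0)
    (u : SchwartzMap ℝ ℂ)
    (hu : ∀ t : ℝ,
      -(deriv (deriv (⇑u)) t) + (ξ : ℂ) ^ 2 * ((t : ℂ) ^ (2 * k₁) + (t : ℂ) ^ (2 * k₂)) * u t
        - (k₁ : ℂ) * (ξ : ℂ) * (t : ℂ) ^ (k₁ - 1) * u t = 0) :
    u = 0 := by
  have hq_pos : Dense {t : ℝ | 0 < ξ ^ 2 * t ^ (2 * k₂)} :=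
    (dense_compl_singleton 0).mono fun t ht =>
      mul_pos (by positivity) ((even_two_mul k₂).pow_pos ht)
  refine SchwartzMap.eq_zero_of_deriv_deriv_eq_smul (w := fun t => ξ * t ^ k₁) (by fun_prop)
    (fun t => mul_nonneg (sq_nonneg ξ) ((even_two_mul k₂).pow_nonneg t)) hq_pos fun t => ?_
  rw [((hasDerivAt_pow k₁ t).const_mul ξ).deriv, Complex.real_smul]
  push_cast
  linear_combination -hu t

/-- Let `k₁, k₂ ≥ 1` be integers and `ξ ∈ ℝ` with `ξ ≠ 0`. If `u ∈ 𝒮(ℝ)`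
satisfies `−u''(t) + ξ²·(t^(2k₁) + t^(2k₂))·u(t) − k₁·ξ·t^(k₁−1)·u(t) = 0` for all `t ∈ ℝ`,
then `u = 0`. -/
theorem stmt_4 (k₁ k₂ : ℕ) (hk₁ : 1 ≤ k₁) (hk₂ : 1 ≤ k₂) (ξ : ℝ) (hξ : ξ ≠ 0)
    (u : SchwartzMap ℝ ℂ)
    (hu : ∀ t : ℝ,
      -(deriv (deriv (⇑u)) t) + (ξ : ℂ) ^ 2 * ((t : ℂ) ^ (2 * k₁) + (t : ℂ) ^ (2 * k₂)) * u t
        - (k₁ : ℂ) * (ξ : ℂ) * (t : ℂ) ^ (k₁ - 1) * u t = 0) :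
    u = 0 :=
  stmt_4_general k₁ k₂ ξ hξ u hu
end

section
/- Let h ≥ 1 be an integer and a > 0, ξ ≠ 0, f₀ ≠ 0 real numbers. If u ∈ 𝒮(ℝ) satisfies (1 + f₀²)·(−u''(t) + a²ξ²t^(2h)u(t)) − (1 − f₀²)·h·a·ξ·t^(h−1)·u(t) = 0 for all t ∈ ℝ, then u = 0. -/
/-!
With `w t = a ξ tʰ`, `A = d/dt - w` and its formal adjoint `A* = -d/dt - w`, the equation reads
`A A* u + f₀² A* A u = 0`. Pairing with `u` and integrating by parts gives
`‖A* u‖² + f₀² ‖A u‖² = 0`, so `A u = A* u = 0` and hence `w u = -(A u + A* u) / 2 = 0`,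
which forces `u = 0` off `t = 0`. The integration by parts is done pointwise: for
`α A A* + β A* A`, the flux `(α + β) ⟪v', v⟫ + (α - β) w ‖v‖²` has derivative
`α ‖v' + w v‖² + β ‖v' - w v‖² ≥ 0` along a solution and vanishes at `±∞`, so the derivative is
identically zero.
-/

open Filter Topology

section Flux

variable {E : Type*} [NormedAddCommGroup E] [InnerProductSpace ℝ E]

lemma eq_zero_of_hasDerivAt_of_nonneg_of_tendsto {F F' : ℝ → ℝ}
    (hF : ∀ t, HasDerivAt F (F' t) t) (hF' : ∀ t, 0 ≤ F' t)
    (hbot : Tendsto F atBot (𝓝 0)) (htop : Tendsto F atTop (𝓝 0)) (t : ℝ) : F' t = 0 := by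
  have hmono : Monotone F := monotone_of_hasDerivAt_nonneg hF hF'
  have hzero : F = fun _ ↦ 0 :=
    funext fun s ↦ le_antisymm (hmono.ge_of_tendsto htop s) (hmono.le_of_tendsto hbot s)
  exact (hF t).unique (hzero ▸ hasDerivAt_const t 0)

section

variable (α β : ℝ) (w : ℝ → ℝ) (v v' : ℝ → E)

def flux (t : ℝ) : ℝ := (α + β) * inner ℝ (v' t) (v t) + (α - β) * w t * ‖v t‖ ^ 2

lemma hasDerivAt_flux {w' : ℝ → ℝ} {v'' : ℝ → E} {t : ℝ} (hw : HasDerivAt w (w' t) t)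
    (hv : HasDerivAt v (v' t) t) (hv' : HasDerivAt v' (v'' t) t)
    (heq : (α + β) • v'' t = ((α + β) * w t ^ 2 - (α - β) * w' t) • v t) :
    HasDerivAt (flux α β w v v')
      (α * ‖v' t + w t • v t‖ ^ 2 + β * ‖v' t - w t • v t‖ ^ 2) t := by
  have hderiv := ((hv'.inner ℝ hv).const_mul (α + β)).add
    ((hw.const_mul (α - β)).mul hv.norm_sq)
  refine hderiv.congr_deriv ?_
  have hpair : (α + β) * inner ℝ (v'' t) (v t) =
      ((α + β) * w t ^ 2 - (α - β) * w' t) * ‖v t‖ ^ 2 := by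
    rw [← real_inner_smul_left, heq, real_inner_smul_left, real_inner_self_eq_norm_sq]
  rw [norm_add_sq_real, norm_sub_sq_real, mul_add, hpair, inner_smul_right, norm_smul,
    real_inner_comm (v t) (v' t), real_inner_self_eq_norm_sq, Real.norm_eq_abs, mul_pow, sq_abs]
  ring

lemma tendsto_flux {l : Filter ℝ} (hv : Tendsto v l (𝓝 0))
    (hv' : IsBoundedUnder (· ≤ ·) l fun t ↦ ‖v' t‖)
    (hwv : IsBoundedUnder (· ≤ ·) l fun t ↦ ‖w t • v t‖) :
    Tendsto (flux α β w v v') l (𝓝 0) := by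
  have hnorm : Tendsto (fun t ↦ ‖v t‖) l (𝓝 0) := by simpa using hv.norm
  have hbound : ∀ t, ‖flux α β w v v' t‖ ≤
      |α + β| * (‖v t‖ * ‖v' t‖) + |α - β| * (‖v t‖ * ‖w t • v t‖) := by
    intro t
    have hinner := abs_real_inner_le_norm (v' t) (v t)
    calc ‖flux α β w v v' t‖
        ≤ |α + β| * |inner ℝ (v' t) (v t)| + |α - β| * (|w t| * ‖v t‖ ^ 2) := by
          refine (abs_add_le _ _).trans_eq ?_
          simp only [abs_mul, abs_pow, abs_norm, mul_assoc]
      _ ≤ |α + β| * (‖v' t‖ * ‖v t‖) + |α - β| * (|w t| * ‖v t‖ ^ 2) := by gcongr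
      _ = _ := by rw [norm_smul, Real.norm_eq_abs]; ring
  have hv'_small := hnorm.zero_mul_isBoundedUnder_le (g := fun t ↦ ‖v' t‖)
    (by simpa [Function.comp_def] using hv')
  have hwv_small := hnorm.zero_mul_isBoundedUnder_le (g := fun t ↦ ‖w t • v t‖)
    (by simpa [Function.comp_def] using hwv)
  refine squeeze_zero_norm hbound ?_
  simpa using (hv'_small.const_mul |α + β|).add (hwv_small.const_mul |α - β|)

end

theorem smul_eq_zero_of_decaying_solution {α β : ℝ} (hα : 0 < α) (hβ : 0 < β) {w w' : ℝ → ℝ}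
    {v v' v'' : ℝ → E} (hw : ∀ t, HasDerivAt w (w' t) t) (hv : ∀ t, HasDerivAt v (v' t) t)
    (hv' : ∀ t, HasDerivAt v' (v'' t) t)
    (heq : ∀ t, (α + β) • v'' t = ((α + β) * w t ^ 2 - (α - β) * w' t) • v t)
    (hv_lim : Tendsto v (cocompact ℝ) (𝓝 0))
    (hv'_bdd : IsBoundedUnder (· ≤ ·) (cocompact ℝ) fun t ↦ ‖v' t‖)
    (hwv_bdd : IsBoundedUnder (· ≤ ·) (cocompact ℝ) fun t ↦ ‖w t • v t‖) (t : ℝ) :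
    w t • v t = 0 := by
  have hflux {l : Filter ℝ} (hl : l ≤ cocompact ℝ) : Tendsto (flux α β w v v') l (𝓝 0) :=
    tendsto_flux α β w v v' (hv_lim.mono_left hl) (hv'_bdd.mono hl) (hwv_bdd.mono hl)
  have henergy := eq_zero_of_hasDerivAt_of_nonneg_of_tendsto
    (fun s ↦ hasDerivAt_flux α β w v v' (hw s) (hv s) (hv' s) (heq s)) (fun s ↦ by positivity)
    (hflux atBot_le_cocompact) (hflux atTop_le_cocompact) t
  obtain ⟨hplus, hminus⟩ := (add_eq_zero_iff_of_nonneg (by positivity) (by positivity)).1 henergy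
  rw [mul_eq_zero, pow_eq_zero_iff two_ne_zero, norm_eq_zero] at hplus hminus
  have hdiff : w t • v t = (1 / 2 : ℝ) • ((v' t + w t • v t) - (v' t - w t • v t)) := by module
  rw [hdiff, hplus.resolve_left hα.ne', hminus.resolve_left hβ.ne', sub_zero, smul_zero]

end Flux

theorem stmt_5_general (h : ℕ) (a ξ f₀ : ℝ) (ha : 0 < a) (hξ : ξ ≠ 0) (hf₀ : f₀ ≠ 0)
    (u : SchwartzMap ℝ ℂ)
    (hu : ∀ t : ℝ,
      (1 + (f₀ : ℂ) ^ 2) * (-(deriv (deriv (⇑u)) t) + (a : ℂ) ^ 2 * (ξ : ℂ) ^ 2 * (t : ℂ) ^ (2 * h) * u t)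
        - (1 - (f₀ : ℂ) ^ 2) * (h : ℂ) * (a : ℂ) * (ξ : ℂ) * (t : ℂ) ^ (h - 1) * u t = 0) :
    u = 0 := by
  set w : ℝ → ℝ := fun t ↦ a * ξ * t ^ h
  have hw (t : ℝ) : HasDerivAt w (a * ξ * (h * t ^ (h - 1))) t :=
    (hasDerivAt_pow h t).const_mul (a * ξ)
  have hu' (t : ℝ) : HasDerivAt (deriv u) (deriv (deriv u) t) t := by
    have hcoe : ⇑(SchwartzMap.derivCLM ℝ ℂ u) = deriv u :=
      funext (SchwartzMap.derivCLM_apply ℝ u)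
    exact hcoe ▸ (SchwartzMap.derivCLM ℝ ℂ u).differentiableAt.hasDerivAt
  have heq (t : ℝ) : (1 + f₀ ^ 2) • deriv (deriv u) t =
      ((1 + f₀ ^ 2) * w t ^ 2 - (1 - f₀ ^ 2) * (a * ξ * (h * t ^ (h - 1)))) • u t := by
    simp only [w, Complex.real_smul]
    push_cast
    linear_combination -hu t
  have hu'_bdd : IsBoundedUnder (· ≤ ·) (cocompact ℝ) fun t ↦ ‖deriv u t‖ :=
    isBoundedUnder_of ⟨_, fun t ↦ SchwartzMap.derivCLM_apply ℝ u t ▸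
      SchwartzMap.norm_le_seminorm ℝ (SchwartzMap.derivCLM ℝ ℂ u) t⟩
  have hwu_bdd : IsBoundedUnder (· ≤ ·) (cocompact ℝ) fun t ↦ ‖w t • u t‖ := by
    refine isBoundedUnder_of ⟨|a * ξ| * SchwartzMap.seminorm ℝ h 0 u, fun t ↦ ?_⟩
    rw [norm_smul, Real.norm_eq_abs, abs_mul, abs_pow, ← Real.norm_eq_abs t, mul_assoc]
    exact mul_le_mul_of_nonneg_left (u.norm_pow_mul_le_seminorm ℝ h t) (abs_nonneg _)
  have hwu := smul_eq_zero_of_decaying_solution zero_lt_one (by positivity) hw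
    (fun t ↦ u.differentiableAt.hasDerivAt) hu' heq u.tendsto_cocompact hu'_bdd hwu_bdd
  have hu_off (t : ℝ) (ht : t ≠ 0) : u t = 0 :=
    (smul_eq_zero.1 (hwu t)).resolve_left (by simp [w, ha.ne', hξ, ht])
  ext t
  exact congrFun (Continuous.ext_on (dense_compl_singleton 0) u.continuous continuous_const
    fun s hs ↦ hu_off s hs) t

/-- Let `h ≥ 1` be an integer and `a > 0`, `ξ ≠ 0`, `f₀ ≠ 0` real numbers.
If `u ∈ 𝒮(ℝ)` satisfies
`(1 + f₀²)·(−u''(t) + a²ξ²t^(2h)u(t)) − (1 − f₀²)·h·a·ξ·t^(h−1)·u(t) = 0` for all `t ∈ ℝ`,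
then `u = 0`. -/
theorem stmt_5 (h : ℕ) (hh : 1 ≤ h) (a ξ f₀ : ℝ) (ha : 0 < a) (hξ : ξ ≠ 0) (hf₀ : f₀ ≠ 0)
    (u : SchwartzMap ℝ ℂ)
    (hu : ∀ t : ℝ,
      (1 + (f₀ : ℂ) ^ 2) * (-(deriv (deriv (⇑u)) t) + (a : ℂ) ^ 2 * (ξ : ℂ) ^ 2 * (t : ℂ) ^ (2 * h) * u t)
        - (1 - (f₀ : ℂ) ^ 2) * (h : ℂ) * (a : ℂ) * (ξ : ℂ) * (t : ℂ) ^ (h - 1) * u t = 0) :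
    u = 0 :=
  stmt_5_general h a ξ f₀ ha hξ hf₀ u hu
end

section
/- Let h ≥ 1 be an integer, A > 0 and B real numbers. Suppose φ ∈ 𝒮(ℝ) satisfies −φ''(t) + A t^(2h) φ(t) + B t^(h−1) φ(t) = 0 for all t ∈ ℝ. Then A · ∫ℝ t^(2h) |φ(t)|² dt = −(B/2) · ∫ℝ t^(h−1) |φ(t)|² dt. -/
/-!
Let `V` be a real polynomial potential and `φ` a Schwartz solution of `φ'' = V φ`. Integrating
`(⟪φ, φ'⟫)' = ‖φ'‖² + V ‖φ‖²` over `ℝ` gives the energy identity `∫ ‖φ'‖² + ∫ V ‖φ‖² = 0`;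
integrating `(t ‖φ'‖² - t V ‖φ‖²)' = ‖φ'‖² - (t V)' ‖φ‖²` (the infinitesimal form of dilation
invariance) gives `∫ ‖φ'‖² = ∫ (t V)' ‖φ‖²`. Hence `∫ (V + (t V)') ‖φ‖² = 0`. For
`V = A t^(2h) + B t^(h-1)` one has `V + (t V)' = (2h + 2) A t^(2h) + (h + 1) B t^(h-1)`.
-/

open MeasureTheory Polynomial
open scoped RealInnerProductSpace

namespace SchwartzMap

variable {E : Type*} [NormedAddCommGroup E] [InnerProductSpace ℝ E]

theorem integrable_pow_mul_inner (f g : 𝓢(ℝ, E)) (k : ℕ) :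
    Integrable fun t : ℝ => t ^ k * ⟪f t, g t⟫ := by
  refine ((f.integrable_pow_mul volume k).mul_const (SchwartzMap.seminorm ℝ 0 0 g)).mono'
    (by fun_prop) (.of_forall fun t => ?_)
  calc ‖t ^ k * ⟪f t, g t⟫‖ ≤ ‖t‖ ^ k * (‖f t‖ * ‖g t‖) := by
        rw [norm_mul, norm_pow]; gcongr; exact norm_inner_le_norm _ _
    _ ≤ ‖t‖ ^ k * ‖f t‖ * SchwartzMap.seminorm ℝ 0 0 g := by
        rw [← mul_assoc]; gcongr; exact g.norm_le_seminorm ℝ t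

theorem integrable_eval_mul_inner (p : ℝ[X]) (f g : 𝓢(ℝ, E)) :
    Integrable fun t : ℝ => p.eval t * ⟪f t, g t⟫ := by
  induction p using Polynomial.induction_on' with
  | add p q hp hq =>
    simp only [eval_add, add_mul]
    exact hp.add hq
  | monomial n a =>
    simpa only [eval_monomial, mul_assoc] using (f.integrable_pow_mul_inner g n).const_mul a

theorem integrable_eval_mul_norm_sq (p : ℝ[X]) (f : 𝓢(ℝ, E)) :
    Integrable fun t : ℝ => p.eval t * ‖f t‖ ^ 2 := by
  simpa only [real_inner_self_eq_norm_sq] using integrable_eval_mul_inner p f f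

theorem integrable_eval_mul_norm_deriv_sq (p : ℝ[X]) (f : 𝓢(ℝ, E)) :
    Integrable fun t : ℝ => p.eval t * ‖deriv f t‖ ^ 2 :=
  integrable_eval_mul_norm_sq p (derivCLM ℝ E f)

section Schrodinger

variable {φ : 𝓢(ℝ, E)} {V : ℝ[X]}

theorem hasDerivAt_deriv_of_deriv_deriv_eq (hφ : ∀ t, deriv (deriv φ) t = V.eval t • φ t)
    (t : ℝ) : HasDerivAt (deriv φ) (V.eval t • φ t) t := by
  rw [← hφ t]
  exact (derivCLM ℝ E φ).hasDerivAt t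

theorem integral_norm_deriv_sq_add_integral_eval_mul_norm_sq
    (hφ : ∀ t, deriv (deriv φ) t = V.eval t • φ t) :
    (∫ t, ‖deriv φ t‖ ^ 2) + ∫ t, V.eval t * ‖φ t‖ ^ 2 = 0 := by
  have hG : ∀ t, HasDerivAt (fun s => ⟪φ s, deriv φ s⟫)
      (‖deriv φ t‖ ^ 2 + V.eval t * ‖φ t‖ ^ 2) t := fun t => by
    refine ((φ.hasDerivAt t).inner ℝ (hasDerivAt_deriv_of_deriv_deriv_eq hφ t)).congr_deriv ?_
    rw [real_inner_smul_right, real_inner_self_eq_norm_sq, real_inner_self_eq_norm_sq, add_comm]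
  have hψ : Integrable fun t => ‖deriv φ t‖ ^ 2 := by
    simpa using integrable_eval_mul_norm_deriv_sq 1 φ
  rw [← integral_add hψ (integrable_eval_mul_norm_sq V φ)]
  exact integral_eq_zero_of_hasDerivAt_of_integrable hG
    (hψ.add (integrable_eval_mul_norm_sq V φ))
    (by simpa using integrable_eval_mul_inner 1 φ (derivCLM ℝ E φ))

theorem integral_norm_deriv_sq_eq_integral_eval_derivative_X_mul_mul_norm_sq
    (hφ : ∀ t, deriv (deriv φ) t = V.eval t • φ t) :
    ∫ t, ‖deriv φ t‖ ^ 2 = ∫ t, (derivative (X * V)).eval t * ‖φ t‖ ^ 2 := by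
  have hG : ∀ t, HasDerivAt (fun s => s * ‖deriv φ s‖ ^ 2 - (X * V).eval s * ‖φ s‖ ^ 2)
      (‖deriv φ t‖ ^ 2 - (derivative (X * V)).eval t * ‖φ t‖ ^ 2) t := fun t => by
    refine (((hasDerivAt_id t).mul (hasDerivAt_deriv_of_deriv_deriv_eq hφ t).norm_sq).sub
      (((X * V).hasDerivAt t).mul (φ.hasDerivAt t).norm_sq)).congr_deriv ?_
    simp only [eval_mul, eval_X, id, real_inner_smul_right, real_inner_comm (φ t)]
    ring
  have hψ : Integrable fun t => ‖deriv φ t‖ ^ 2 := by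
    simpa using integrable_eval_mul_norm_deriv_sq 1 φ
  have htψ : Integrable fun t => t * ‖deriv φ t‖ ^ 2 := by
    simpa using integrable_eval_mul_norm_deriv_sq X φ
  rw [← sub_eq_zero, ← integral_sub hψ (integrable_eval_mul_norm_sq _ φ)]
  exact integral_eq_zero_of_hasDerivAt_of_integrable hG
    (hψ.sub (integrable_eval_mul_norm_sq _ φ))
    (htψ.sub (integrable_eval_mul_norm_sq (X * V) φ))

theorem integral_eval_add_derivative_X_mul_mul_norm_sq_eq_zero
    (hφ : ∀ t, deriv (deriv φ) t = V.eval t • φ t) :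
    ∫ t, (V + derivative (X * V)).eval t * ‖φ t‖ ^ 2 = 0 := by
  simp only [eval_add, add_mul]
  rw [integral_add (integrable_eval_mul_norm_sq _ φ) (integrable_eval_mul_norm_sq _ φ)]
  linarith [integral_norm_deriv_sq_add_integral_eval_mul_norm_sq hφ,
    integral_norm_deriv_sq_eq_integral_eval_derivative_X_mul_mul_norm_sq hφ]

end Schrodinger

end SchwartzMap

theorem stmt_10_general (h : ℕ) (hh : 1 ≤ h) (A B : ℝ) (φ : SchwartzMap ℝ ℂ)
    (hφ : ∀ t : ℝ, -(deriv (deriv (⇑φ)) t) + (A : ℂ) * (t : ℂ) ^ (2 * h) * φ t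
      + (B : ℂ) * (t : ℂ) ^ (h - 1) * φ t = 0) :
    A * (∫ t : ℝ, t ^ (2 * h) * ‖φ t‖ ^ 2) = -(B / 2) * ∫ t : ℝ, t ^ (h - 1) * ‖φ t‖ ^ 2 := by
  obtain ⟨m, rfl⟩ := Nat.exists_eq_add_of_le' hh
  simp only [Nat.add_sub_cancel] at hφ ⊢
  set V : ℝ[X] := C A * X ^ (2 * (m + 1)) + C B * X ^ m
  have hφV : ∀ t, deriv (deriv φ) t = V.eval t • φ t := fun t => by
    simp only [V, eval_add, eval_mul, eval_C, eval_pow, eval_X, Complex.real_smul]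
    push_cast
    linear_combination -hφ t
  have hXV : X * V = C A * X ^ (2 * (m + 1) + 1) + C B * X ^ (m + 1) := by ring
  have hdilated : V + derivative (X * V)
      = C ((2 * m + 4) * A) * X ^ (2 * (m + 1)) + C ((m + 2) * B) * X ^ m := by
    rw [hXV, derivative_add, derivative_C_mul_X_pow, derivative_C_mul_X_pow, Nat.add_sub_cancel,
      Nat.add_sub_cancel]
    simp only [V, C_mul, C_add, C_ofNat, map_natCast]
    push_cast
    ring
  have hvirial := SchwartzMap.integral_eval_add_derivative_X_mul_mul_norm_sq_eq_zero hφV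
  rw [hdilated] at hvirial
  simp only [eval_add, add_mul] at hvirial
  rw [integral_add (SchwartzMap.integrable_eval_mul_norm_sq _ φ)
    (SchwartzMap.integrable_eval_mul_norm_sq _ φ)] at hvirial
  simp only [eval_mul, eval_C, eval_pow, eval_X, mul_assoc, integral_const_mul] at hvirial
  refine mul_left_cancel₀ (by positivity : (2 * (m : ℝ) + 4) ≠ 0) ?_
  linear_combination hvirial

/-- Let `h ≥ 1` be an integer, `A > 0` and `B` real numbers. Suppose `φ ∈ 𝒮(ℝ)`
satisfies `−φ''(t) + A t^(2h) φ(t) + B t^(h−1) φ(t) = 0` for all `t ∈ ℝ`. Then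
`A · ∫ t^(2h) |φ(t)|² dt = −(B/2) · ∫ t^(h−1) |φ(t)|² dt`. -/
theorem stmt_10 (h : ℕ) (hh : 1 ≤ h) (A B : ℝ) (hA : 0 < A) (φ : SchwartzMap ℝ ℂ)
    (hφ : ∀ t : ℝ, -(deriv (deriv (⇑φ)) t) + (A : ℂ) * (t : ℂ) ^ (2 * h) * φ t
      + (B : ℂ) * (t : ℂ) ^ (h - 1) * φ t = 0) :
    A * (∫ t : ℝ, t ^ (2 * h) * ‖φ t‖ ^ 2) = -(B / 2) * ∫ t : ℝ, t ^ (h - 1) * ‖φ t‖ ^ 2 :=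
  stmt_10_general h hh A B φ hφ
end

section
/- Let h ≥ 1 be an integer, A > 0 and B real numbers, and let φ ∈ 𝒮(ℝ) be not identically zero with −φ''(t) + A t^(2h) φ(t) + B t^(h−1) φ(t) = 0 for all t ∈ ℝ. Then ∫ℝ t^(h−1) |φ(t)|² dt ≠ 0; more precisely B ≠ 0 and B · ∫ℝ t^(h−1) |φ(t)|² dt < 0. -/
/-!
Taking the real inner product of `φ'' = (A t^(2h) + B t^(h-1)) φ` with `φ` and integrating by
parts gives `A ∫ t^(2h) |φ|² + B ∫ t^(h-1) |φ|² = -∫ |φ'|² ≤ 0`. The first term is positive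
because `φ ≠ 0`, so `B ∫ t^(h-1) |φ|² < 0`.
-/

open MeasureTheory

namespace SchwartzMap

variable {D V : Type*} [NormedAddCommGroup D] [NormedSpace ℝ D] [MeasurableSpace D] [BorelSpace D]
  [SecondCountableTopology D] [NormedAddCommGroup V] [NormedSpace ℝ V]

lemma integrable_pow_mul_norm_sq (μ : Measure D) [μ.HasTemperateGrowth] (f : 𝓢(D, V)) (k : ℕ) :
    Integrable (fun x ↦ ‖x‖ ^ k * ‖f x‖ ^ 2) μ := by
  obtain ⟨C, -, hC⟩ := f.decay 0 0
  refine ((f.integrable_pow_mul μ k).bdd_mul (f := fun x ↦ ‖f x‖) (c := C) (by fun_prop)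
    (.of_forall fun x ↦ ?_)).congr (.of_forall fun x ↦ ?_)
  · simpa using hC x
  · simp only; ring

lemma integral_pow_mul_norm_sq_pos [Nontrivial D] (μ : Measure D) [μ.HasTemperateGrowth]
    [μ.IsOpenPosMeasure] {f : 𝓢(D, V)} (hf : f ≠ 0) (k : ℕ) :
    0 < ∫ x, ‖x‖ ^ k * ‖f x‖ ^ 2 ∂μ := by
  -- the weight only vanishes at `0`, and `{0}ᶜ` is dense, so it meets the open support of `f`
  obtain ⟨x, hfx, hx0⟩ := (dense_compl_singleton (0 : D)).inter_open_nonempty _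
    f.continuous.isOpen_support (Function.support_nonempty_iff.2 fun h ↦ hf (ext (congrFun h)))
  exact integral_pos_of_integrable_nonneg_nonzero (x := x) (by fun_prop)
    (f.integrable_pow_mul_norm_sq μ k) (fun x ↦ by positivity) (by simp_all)

variable {E : Type*} [NormedAddCommGroup E] [InnerProductSpace ℝ E]

theorem integral_inner_deriv_deriv (f : 𝓢(ℝ, E)) :
    ∫ x, inner ℝ (f x) (deriv (deriv f) x) = -∫ x, ‖deriv f x‖ ^ 2 := by
  simp_rw [← real_inner_self_eq_norm_sq]
  exact integral_bilinear_deriv_right_eq_neg_left f (derivCLM ℝ E f) (innerSL ℝ)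

theorem integral_mul_norm_sq_nonpos_of_deriv_deriv_eq_smul {W : ℝ → ℝ} (f : 𝓢(ℝ, E))
    (hf : ∀ t, deriv (deriv f) t = W t • f t) : ∫ t, W t * ‖f t‖ ^ 2 ≤ 0 := by
  have h := f.integral_inner_deriv_deriv
  simp only [hf, real_inner_smul_right, real_inner_self_eq_norm_sq] at h
  rw [h, neg_nonpos]
  exact integral_nonneg fun t ↦ by positivity

end SchwartzMap

theorem stmt_11_general (h : ℕ) (A B : ℝ) (hA : 0 < A) (φ : SchwartzMap ℝ ℂ)
    (hφ0 : φ ≠ 0)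
    (hφ : ∀ t : ℝ, -(deriv (deriv (⇑φ)) t) + (A : ℂ) * (t : ℂ) ^ (2 * h) * φ t
      + (B : ℂ) * (t : ℂ) ^ (h - 1) * φ t = 0) :
    (∫ t : ℝ, t ^ (h - 1) * ‖φ t‖ ^ 2) ≠ 0 ∧ B ≠ 0 ∧
      B * (∫ t : ℝ, t ^ (h - 1) * ‖φ t‖ ^ 2) < 0 := by
  have hint (k : ℕ) : Integrable (fun t : ℝ ↦ t ^ k * ‖φ t‖ ^ 2) :=
    (φ.integrable_pow_mul_norm_sq volume k).mono' (by fun_prop)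
      (.of_forall fun t ↦ by simp)
  have hpos : 0 < ∫ t : ℝ, t ^ (2 * h) * ‖φ t‖ ^ 2 := by
    simpa only [Real.norm_eq_abs, (even_two_mul h).pow_abs] using
      φ.integral_pow_mul_norm_sq_pos volume hφ0 (2 * h)
  have hvirial : ∫ t : ℝ, (A * t ^ (2 * h) + B * t ^ (h - 1)) * ‖φ t‖ ^ 2 ≤ 0 :=
    φ.integral_mul_norm_sq_nonpos_of_deriv_deriv_eq_smul fun t ↦ by
      rw [Complex.real_smul]; push_cast; linear_combination -hφ t
  have hsplit : ∫ t : ℝ, (A * t ^ (2 * h) + B * t ^ (h - 1)) * ‖φ t‖ ^ 2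
      = A * (∫ t : ℝ, t ^ (2 * h) * ‖φ t‖ ^ 2) + B * ∫ t : ℝ, t ^ (h - 1) * ‖φ t‖ ^ 2 := by
    simp only [add_mul, mul_assoc]
    rw [integral_add ((hint _).const_mul A) ((hint _).const_mul B), integral_const_mul,
      integral_const_mul]
  have hBI : B * ∫ t : ℝ, t ^ (h - 1) * ‖φ t‖ ^ 2 < 0 := by nlinarith
  exact ⟨right_ne_zero_of_mul hBI.ne, left_ne_zero_of_mul hBI.ne, hBI⟩

/-- Let `h ≥ 1` be an integer, `A > 0` and `B` real numbers, and let `φ ∈ 𝒮(ℝ)`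
be not identically zero with `−φ''(t) + A t^(2h) φ(t) + B t^(h−1) φ(t) = 0` for all `t ∈ ℝ`.
Then `∫ t^(h−1) |φ(t)|² dt ≠ 0`; more precisely `B ≠ 0` and `B · ∫ t^(h−1) |φ(t)|² dt < 0`. -/
theorem stmt_11 (h : ℕ) (hh : 1 ≤ h) (A B : ℝ) (hA : 0 < A) (φ : SchwartzMap ℝ ℂ)
    (hφ0 : φ ≠ 0)
    (hφ : ∀ t : ℝ, -(deriv (deriv (⇑φ)) t) + (A : ℂ) * (t : ℂ) ^ (2 * h) * φ t
      + (B : ℂ) * (t : ℂ) ^ (h - 1) * φ t = 0) :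
    (∫ t : ℝ, t ^ (h - 1) * ‖φ t‖ ^ 2) ≠ 0 ∧ B ≠ 0 ∧
      B * (∫ t : ℝ, t ^ (h - 1) * ‖φ t‖ ^ 2) < 0 :=
  stmt_11_general h A B hA φ hφ0 hφ
end

section
/- Let g : ℝ → ℝ be continuously differentiable, let G(x) = ∫₀ˣ g(τ) dτ, and let I be an open interval containing 0 on which G ≥ 0. Define u : I × ℝ → ℂ by u(x₁,x₂) = ∫₀^∞ e^{i x₂ ξ} e^{−G(x₁) ξ} (1 + ξ⁴)^{−1} dξ. Then u is continuous, the partial derivatives ∂²u/∂x₁², ∂²u/∂x₂², ∂u/∂x₂ exist and are continuous on I × ℝ, and u satisfies −∂²u/∂x₁² − g(x₁)² ∂²u/∂x₂² + i g'(x₁) ∂u/∂x₂ = 0 at every point of I × ℝ. -/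
/-! With `z = i x₂ - G x₁` we have `u = F₀ z`, where `Fₙ z = ∫₀^∞ ξⁿ e^{zξ} (1 + ξ⁴)⁻¹ dξ`
is `weightedLaplace w n z` for the weight `w ξ = (1 + ξ⁴)⁻¹`.
Since `G ≥ 0` on `I`, `z` stays in the closed left half-plane, where `|e^{zξ}| ≤ 1`; there `Fₙ`
(`n ≤ 2`) is continuous, and along a `C¹` curve `z(s)` in it, `Fₙ ∘ z` has derivative
`z' · Fₙ₊₁ ∘ z` by differentiation under the integral sign, dominated by `ξⁿ⁺¹ (1 + ξ⁴)⁻¹`.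
Hence `∂₂u = i F₁`, `∂₂²u = -F₂`, `∂₁u = -g F₁`, `∂₁²u = g² F₂ - g' F₁`, and the equation
reduces to `-(g² F₂ - g' F₁) + g² F₂ + i g' · i F₁ = 0`. -/

open MeasureTheory Set Filter Topology
open Complex (I)

noncomputable def weightedLaplace (w : ℝ → ℂ) (n : ℕ) (z : ℂ) : ℂ :=
  ∫ ξ in Ioi (0 : ℝ), (ξ : ℂ) ^ n * w ξ * Complex.exp (z * ξ)

namespace weightedLaplace

variable {w : ℝ → ℂ} {n : ℕ}

lemma norm_integrand_le {c z : ℂ} (hz : z.re ≤ 0) {ξ : ℝ} (hξ : ξ ∈ Ioi 0) :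
    ‖c * Complex.exp (z * ξ)‖ ≤ ‖c‖ := by
  rw [norm_mul, Complex.norm_exp, Complex.re_mul_ofReal]
  exact mul_le_of_le_one_right (norm_nonneg c)
    (Real.exp_le_one_iff.2 (mul_nonpos_of_nonpos_of_nonneg hz (le_of_lt hξ)))

lemma integrableOn_integrand (hw : IntegrableOn (fun ξ : ℝ => (ξ : ℂ) ^ n * w ξ) (Ioi 0))
    {z : ℂ} (hz : z.re ≤ 0) :
    IntegrableOn (fun ξ : ℝ => (ξ : ℂ) ^ n * w ξ * Complex.exp (z * ξ)) (Ioi 0) :=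
  Integrable.mono' hw.norm (hw.aestronglyMeasurable.mul (by fun_prop))
    ((ae_restrict_iff' measurableSet_Ioi).2 (.of_forall fun _ => norm_integrand_le hz))

lemma continuousOn (hw : IntegrableOn (fun ξ : ℝ => (ξ : ℂ) ^ n * w ξ) (Ioi 0)) :
    ContinuousOn (weightedLaplace w n) {z | z.re ≤ 0} :=
  continuousOn_of_dominated
    (fun _ hz => (integrableOn_integrand hw hz).aestronglyMeasurable)
    (fun _ hz => (ae_restrict_iff' measurableSet_Ioi).2 (.of_forall fun _ => norm_integrand_le hz))
    hw.norm (.of_forall fun _ => by fun_prop)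

theorem _root_.HasDerivAt.weightedLaplace_comp
    (hw : IntegrableOn (fun ξ : ℝ => (ξ : ℂ) ^ n * w ξ) (Ioi 0))
    (hw' : IntegrableOn (fun ξ : ℝ => (ξ : ℂ) ^ (n + 1) * w ξ) (Ioi 0))
    {z ζ : ℝ → ℂ} {t : ℝ} (hz : ∀ᶠ s in 𝓝 t, HasDerivAt z (ζ s) s ∧ (z s).re ≤ 0)
    (hζ : ContinuousAt ζ t) :
    HasDerivAt (fun s => weightedLaplace w n (z s))
      (ζ t * weightedLaplace w (n + 1) (z t)) t := by
  have hζ_bdd : ∀ᶠ s in 𝓝 t, ‖ζ s‖ < ‖ζ t‖ + 1 :=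
    hζ.norm.eventually_lt continuousAt_const (lt_add_one _)
  obtain ⟨ε, hε, hball⟩ := Metric.eventually_nhds_iff_ball.1 (hz.and hζ_bdd)
  have key := hasDerivAt_integral_of_dominated_loc_of_deriv_le
    (μ := volume.restrict (Ioi 0)) (Metric.ball_mem_nhds t hε)
    (F := fun s (ξ : ℝ) => (ξ : ℂ) ^ n * w ξ * Complex.exp (z s * ξ))
    (F' := fun s (ξ : ℝ) => ζ s * ((ξ : ℂ) ^ (n + 1) * w ξ * Complex.exp (z s * ξ)))
    (bound := fun ξ : ℝ => (‖ζ t‖ + 1) * ‖(ξ : ℂ) ^ (n + 1) * w ξ‖)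
    (hz.mono fun s hs => (integrableOn_integrand hw hs.2).aestronglyMeasurable)
    (integrableOn_integrand hw (hball t (Metric.mem_ball_self hε)).1.2)
    ((integrableOn_integrand hw' (hball t (Metric.mem_ball_self hε)).1.2).const_mul
      _ |>.aestronglyMeasurable)
    ((ae_restrict_iff' measurableSet_Ioi).2 (.of_forall fun ξ hξ s hs => by
      rw [norm_mul]
      exact mul_le_mul (hball s hs).2.le (norm_integrand_le (hball s hs).1.2 hξ)
        (norm_nonneg _) (by positivity)))
    (hw'.norm.const_mul _)
    (.of_forall fun ξ s hs => by
      have := (((hball s hs).1.1.mul_const (ξ : ℂ)).cexp).const_mul ((ξ : ℂ) ^ n * w ξ)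
      exact this.congr_deriv (by ring))
  simpa only [weightedLaplace, integral_const_mul] using key.2

end weightedLaplace

section PDE

variable {w : ℝ → ℂ} {g G : ℝ → ℝ}

lemma hasDerivAt_weightedLaplace_snd
    (hw : ∀ k ≤ 2, IntegrableOn (fun ξ : ℝ => (ξ : ℂ) ^ k * w ξ) (Ioi 0))
    {n : ℕ} (hn : n ≤ 1) {x₁ : ℝ} (hG : 0 ≤ G x₁) (x₂ : ℝ) :
    HasDerivAt (fun t : ℝ => weightedLaplace w n (I * t - G x₁))
      (I * weightedLaplace w (n + 1) (I * x₂ - G x₁)) x₂ :=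
  HasDerivAt.weightedLaplace_comp (hw n (by omega)) (hw (n + 1) (by omega))
    (.of_forall fun t => ⟨by
      simpa using ((hasDerivAt_id t).ofReal_comp.const_mul I).sub_const (G x₁ : ℂ),
      by simpa using hG⟩) continuousAt_const

lemma hasDerivAt_weightedLaplace_fst
    (hw : ∀ k ≤ 2, IntegrableOn (fun ξ : ℝ => (ξ : ℂ) ^ k * w ξ) (Ioi 0))
    {n : ℕ} (hn : n ≤ 1) (hGd : ∀ x, HasDerivAt G (g x) x) (hg : Continuous g)
    {x₁ : ℝ} (hG : ∀ᶠ s in 𝓝 x₁, 0 ≤ G s) (x₂ : ℝ) :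
    HasDerivAt (fun s : ℝ => weightedLaplace w n (I * x₂ - G s))
      (-g x₁ * weightedLaplace w (n + 1) (I * x₂ - G x₁)) x₁ :=
  HasDerivAt.weightedLaplace_comp (hw n (by omega)) (hw (n + 1) (by omega))
    (hG.mono fun s hs => ⟨(hGd s).ofReal_comp.const_sub _, by simpa using hs⟩)
    (Complex.continuous_ofReal.comp hg).neg.continuousAt

lemma deriv_weightedLaplace_snd
    (hw : ∀ k ≤ 2, IntegrableOn (fun ξ : ℝ => (ξ : ℂ) ^ k * w ξ) (Ioi 0))
    {x₁ : ℝ} (hG : 0 ≤ G x₁) :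
    deriv (fun t : ℝ => weightedLaplace w 0 (I * t - G x₁))
      = fun t : ℝ => I * weightedLaplace w 1 (I * t - G x₁) :=
  funext fun t => (hasDerivAt_weightedLaplace_snd hw zero_le_one hG t).deriv

lemma hasDerivAt_deriv_weightedLaplace_snd
    (hw : ∀ k ≤ 2, IntegrableOn (fun ξ : ℝ => (ξ : ℂ) ^ k * w ξ) (Ioi 0))
    {x₁ : ℝ} (hG : 0 ≤ G x₁) (x₂ : ℝ) :
    HasDerivAt (deriv fun t : ℝ => weightedLaplace w 0 (I * t - G x₁))
      (-weightedLaplace w 2 (I * x₂ - G x₁)) x₂ := by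
  rw [deriv_weightedLaplace_snd hw hG]
  refine ((hasDerivAt_weightedLaplace_snd hw (n := 1) le_rfl hG x₂).const_mul I).congr_deriv ?_
  rw [← mul_assoc, Complex.I_mul_I, neg_one_mul]

lemma deriv_weightedLaplace_fst_eventuallyEq
    (hw : ∀ k ≤ 2, IntegrableOn (fun ξ : ℝ => (ξ : ℂ) ^ k * w ξ) (Ioi 0))
    (hGd : ∀ x, HasDerivAt G (g x) x) (hg : Continuous g)
    {U : Set ℝ} (hU : IsOpen U) (hGU : ∀ x ∈ U, 0 ≤ G x) {x₁ : ℝ} (hx₁ : x₁ ∈ U) (x₂ : ℝ) :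
    deriv (fun s : ℝ => weightedLaplace w 0 (I * x₂ - G s))
      =ᶠ[𝓝 x₁] fun s => -g s * weightedLaplace w 1 (I * x₂ - G s) := by
  filter_upwards [hU.mem_nhds hx₁] with s hs
  exact (hasDerivAt_weightedLaplace_fst hw zero_le_one hGd hg
    (Filter.mem_of_superset (hU.mem_nhds hs) hGU) x₂).deriv

lemma hasDerivAt_deriv_weightedLaplace_fst
    (hw : ∀ k ≤ 2, IntegrableOn (fun ξ : ℝ => (ξ : ℂ) ^ k * w ξ) (Ioi 0))
    (hGd : ∀ x, HasDerivAt G (g x) x) (hg : ContDiff ℝ 1 g)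
    {U : Set ℝ} (hU : IsOpen U) (hGU : ∀ x ∈ U, 0 ≤ G x) {x₁ : ℝ} (hx₁ : x₁ ∈ U) (x₂ : ℝ) :
    HasDerivAt (deriv fun s : ℝ => weightedLaplace w 0 (I * x₂ - G s))
      (g x₁ ^ 2 * weightedLaplace w 2 (I * x₂ - G x₁)
        - deriv g x₁ * weightedLaplace w 1 (I * x₂ - G x₁)) x₁ := by
  refine HasDerivAt.congr_of_eventuallyEq ?_
    (deriv_weightedLaplace_fst_eventuallyEq hw hGd hg.continuous hU hGU hx₁ x₂)
  have hg' := (hg.differentiable one_ne_zero x₁).hasDerivAt.ofReal_comp.fun_neg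
  refine (hg'.fun_mul (hasDerivAt_weightedLaplace_fst hw (n := 1) le_rfl hGd hg.continuous
    (Filter.mem_of_superset (hU.mem_nhds hx₁) hGU) x₂)).congr_deriv ?_
  ring

lemma continuousOn_weightedLaplace_comp
    (hw : ∀ k ≤ 2, IntegrableOn (fun ξ : ℝ => (ξ : ℂ) ^ k * w ξ) (Ioi 0))
    {n : ℕ} (hn : n ≤ 2) (hG : Continuous G) {U : Set ℝ} (hGU : ∀ x ∈ U, 0 ≤ G x) :
    ContinuousOn (fun p : ℝ × ℝ => weightedLaplace w n (I * p.2 - G p.1)) (U ×ˢ univ) :=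
  (weightedLaplace.continuousOn (hw n hn)).comp (by fun_prop)
    fun p hp => by simpa using hGU p.1 hp.1

end PDE

lemma pow_abs_mul_one_add_sq_le {k : ℕ} (hk : k ≤ 2) (ξ : ℝ) :
    |ξ| ^ k * (1 + ξ ^ 2) ≤ 2 * (1 + ξ ^ 4) := by
  rw [← (by decide : Even 2).pow_abs, ← (by decide : Even 4).pow_abs]
  have := abs_nonneg ξ
  interval_cases k <;> nlinarith [sq_nonneg (|ξ| - 1), sq_nonneg (|ξ| ^ 2 - 1)]

lemma integrable_pow_mul_inv_one_add_pow_four {k : ℕ} (hk : k ≤ 2) :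
    Integrable (fun ξ : ℝ => (ξ : ℂ) ^ k * (1 + (ξ : ℂ) ^ 4)⁻¹) := by
  refine (integrable_inv_one_add_sq.const_mul 2).mono' (by fun_prop) (.of_forall fun ξ => ?_)
  have hξ : (0 : ℝ) < 1 + ξ ^ 4 := by positivity
  have hcast : (ξ : ℂ) ^ k * (1 + (ξ : ℂ) ^ 4)⁻¹ = ((ξ ^ k * (1 + ξ ^ 4)⁻¹ : ℝ) : ℂ) := by
    push_cast; rfl
  rw [hcast, Complex.norm_real, Real.norm_eq_abs, abs_mul,
    abs_pow, abs_inv, abs_of_pos hξ, ← div_eq_mul_inv, ← div_eq_mul_inv,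
    div_le_div_iff₀ hξ (by positivity)]
  exact pow_abs_mul_one_add_sq_le hk ξ

theorem stmt_13_general (g : ℝ → ℝ) (hg : ContDiff ℝ 1 g) (G : ℝ → ℝ)
    (hG : ∀ x : ℝ, G x = ∫ τ in (0 : ℝ)..x, g τ)
    (a b : ℝ) (hGnn : ∀ x ∈ Set.Ioo a b, 0 ≤ G x)
    (u : ℝ → ℝ → ℂ)
    (hu : ∀ x₁ x₂ : ℝ, u x₁ x₂ = ∫ ξ in Set.Ioi (0 : ℝ),
      Complex.exp (Complex.I * (x₂ : ℂ) * (ξ : ℂ)) * Complex.exp (-(G x₁ : ℂ) * (ξ : ℂ))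
        / (1 + (ξ : ℂ) ^ 4)) :
    -- u is continuous on I × ℝ
    ContinuousOn (fun p : ℝ × ℝ => u p.1 p.2) (Set.Ioo a b ×ˢ Set.univ) ∧
    -- the relevant first and second partial derivatives exist on I × ℝ
    (∀ x₁ ∈ Set.Ioo a b, ∀ x₂ : ℝ,
      DifferentiableAt ℝ (fun s => u s x₂) x₁ ∧
      DifferentiableAt ℝ (deriv fun s => u s x₂) x₁ ∧
      DifferentiableAt ℝ (u x₁) x₂ ∧
      DifferentiableAt ℝ (deriv (u x₁)) x₂) ∧
    -- ∂²u/∂x₁², ∂²u/∂x₂² and ∂u/∂x₂ are continuous on I × ℝ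
    ContinuousOn (fun p : ℝ × ℝ => deriv (deriv fun s => u s p.2) p.1)
      (Set.Ioo a b ×ˢ Set.univ) ∧
    ContinuousOn (fun p : ℝ × ℝ => deriv (deriv (u p.1)) p.2) (Set.Ioo a b ×ˢ Set.univ) ∧
    ContinuousOn (fun p : ℝ × ℝ => deriv (u p.1) p.2) (Set.Ioo a b ×ˢ Set.univ) ∧
    -- the PDE  −∂²u/∂x₁² − g(x₁)² ∂²u/∂x₂² + i g'(x₁) ∂u/∂x₂ = 0
    (∀ x₁ ∈ Set.Ioo a b, ∀ x₂ : ℝ,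
      -(deriv (deriv fun s => u s x₂) x₁) - ((g x₁ : ℂ)) ^ 2 * deriv (deriv (u x₁)) x₂
        + Complex.I * ((deriv g x₁ : ℝ) : ℂ) * deriv (u x₁) x₂ = 0) := by
  have hw (k : ℕ) (hk : k ≤ 2) :=
    (integrable_pow_mul_inv_one_add_pow_four hk).integrableOn (s := Ioi 0)
  have hgc := hg.continuous
  have hg'c := hg.continuous_deriv le_rfl
  have hGd (x : ℝ) : HasDerivAt G (g x) x := by
    rw [funext hG]
    exact (hgc.integral_hasStrictDerivAt 0 x).hasDerivAt
  have hGc : Continuous G := continuous_iff_continuousAt.2 fun x => (hGd x).continuousAt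
  obtain rfl : u = fun x₁ x₂ : ℝ =>
      weightedLaplace (fun ξ => (1 + (ξ : ℂ) ^ 4)⁻¹) 0 (I * x₂ - G x₁) := by
    ext x₁ x₂
    rw [hu, weightedLaplace]
    congr 1 with ξ
    rw [sub_mul, sub_eq_add_neg, Complex.exp_add, ← neg_mul]
    ring
  have hU := isOpen_Ioo (a := a) (b := b)
  have hΦ₁ := continuousOn_weightedLaplace_comp hw one_le_two hGc hGnn
  have hΦ₂ := continuousOn_weightedLaplace_comp hw le_rfl hGc hGnn
  refine ⟨continuousOn_weightedLaplace_comp hw zero_le_two hGc hGnn,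
    fun x₁ hx₁ x₂ => ⟨?_, ?_, ?_, ?_⟩, ?_, ?_, ?_, fun x₁ hx₁ x₂ => ?_⟩
  · exact (hasDerivAt_weightedLaplace_fst hw zero_le_one hGd hgc
      (Filter.mem_of_superset (hU.mem_nhds hx₁) hGnn) x₂).differentiableAt
  · exact (hasDerivAt_deriv_weightedLaplace_fst hw hGd hg hU hGnn hx₁ x₂).differentiableAt
  · exact (hasDerivAt_weightedLaplace_snd hw zero_le_one (hGnn x₁ hx₁) x₂).differentiableAt
  · exact (hasDerivAt_deriv_weightedLaplace_snd hw (hGnn x₁ hx₁) x₂).differentiableAt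
  · refine ContinuousOn.congr (by fun_prop) fun p hp =>
      (hasDerivAt_deriv_weightedLaplace_fst hw hGd hg hU hGnn hp.1 p.2).deriv
  · exact hΦ₂.neg.congr fun p hp =>
      (hasDerivAt_deriv_weightedLaplace_snd hw (hGnn p.1 hp.1) p.2).deriv
  · exact (hΦ₁.const_mul I).congr fun p hp =>
      congrFun (deriv_weightedLaplace_snd hw (hGnn p.1 hp.1)) p.2
  · rw [(hasDerivAt_deriv_weightedLaplace_fst hw hGd hg hU hGnn hx₁ x₂).deriv,
      (hasDerivAt_deriv_weightedLaplace_snd hw (hGnn x₁ hx₁) x₂).deriv,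
      deriv_weightedLaplace_snd hw (hGnn x₁ hx₁)]
    linear_combination
      ((deriv g x₁ : ℝ) : ℂ) * weightedLaplace _ 1 (I * x₂ - G x₁) * Complex.I_mul_I

/-- Let `g : ℝ → ℝ` be continuously differentiable, let `G(x) = ∫₀ˣ g(τ) dτ`,
and let `I = (a,b)` be an open interval containing `0` on which `G ≥ 0`. Define
`u(x₁,x₂) = ∫₀^∞ e^{i x₂ ξ} e^{−G(x₁) ξ} (1 + ξ⁴)^{−1} dξ`. Then `u` is continuous, the
partial derivatives `∂²u/∂x₁²`, `∂²u/∂x₂²`, `∂u/∂x₂` exist and are continuous on `I × ℝ`,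
and `u` satisfies `−∂²u/∂x₁² − g(x₁)² ∂²u/∂x₂² + i g'(x₁) ∂u/∂x₂ = 0` on `I × ℝ`. -/
theorem stmt_13 (g : ℝ → ℝ) (hg : ContDiff ℝ 1 g) (G : ℝ → ℝ)
    (hG : ∀ x : ℝ, G x = ∫ τ in (0 : ℝ)..x, g τ)
    (a b : ℝ) (ha : a < 0) (hb : 0 < b) (hGnn : ∀ x ∈ Set.Ioo a b, 0 ≤ G x)
    (u : ℝ → ℝ → ℂ)
    (hu : ∀ x₁ x₂ : ℝ, u x₁ x₂ = ∫ ξ in Set.Ioi (0 : ℝ),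
      Complex.exp (Complex.I * (x₂ : ℂ) * (ξ : ℂ)) * Complex.exp (-(G x₁ : ℂ) * (ξ : ℂ))
        / (1 + (ξ : ℂ) ^ 4)) :
    -- u is continuous on I × ℝ
    ContinuousOn (fun p : ℝ × ℝ => u p.1 p.2) (Set.Ioo a b ×ˢ Set.univ) ∧
    -- the relevant first and second partial derivatives exist on I × ℝ
    (∀ x₁ ∈ Set.Ioo a b, ∀ x₂ : ℝ,
      DifferentiableAt ℝ (fun s => u s x₂) x₁ ∧
      DifferentiableAt ℝ (deriv fun s => u s x₂) x₁ ∧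
      DifferentiableAt ℝ (u x₁) x₂ ∧
      DifferentiableAt ℝ (deriv (u x₁)) x₂) ∧
    -- ∂²u/∂x₁², ∂²u/∂x₂² and ∂u/∂x₂ are continuous on I × ℝ
    ContinuousOn (fun p : ℝ × ℝ => deriv (deriv fun s => u s p.2) p.1)
      (Set.Ioo a b ×ˢ Set.univ) ∧
    ContinuousOn (fun p : ℝ × ℝ => deriv (deriv (u p.1)) p.2) (Set.Ioo a b ×ˢ Set.univ) ∧
    ContinuousOn (fun p : ℝ × ℝ => deriv (u p.1) p.2) (Set.Ioo a b ×ˢ Set.univ) ∧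
    -- the PDE  −∂²u/∂x₁² − g(x₁)² ∂²u/∂x₂² + i g'(x₁) ∂u/∂x₂ = 0
    (∀ x₁ ∈ Set.Ioo a b, ∀ x₂ : ℝ,
      -(deriv (deriv fun s => u s x₂) x₁) - ((g x₁ : ℂ)) ^ 2 * deriv (deriv (u x₁)) x₂
        + Complex.I * ((deriv g x₁ : ℝ) : ℂ) * deriv (u x₁) x₂ = 0) :=
  stmt_13_general g hg G hG a b hGnn u hu
end

section
/- Define v : ℝ → ℂ by v(x) = ∫₀^∞ e^{i x ξ} (1 + ξ⁴)^{−1} dξ. Then v is twice differentiable on ℝ with continuous second derivative, but v'' is not differentiable at x = 0; in particular, v is not infinitely differentiable on any open neighborhood of 0. -/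
open MeasureTheory

namespace Stmt14Aux

open Set Filter Real Topology

noncomputable def Fc (x ξ : ℝ) : ℂ :=
  Complex.exp (Complex.I * (x : ℂ) * (ξ : ℂ)) / (1 + (ξ : ℂ) ^ 4)

lemma denom_pos (ξ : ℝ) : 0 < 1 + ξ ^ 4 := by positivity

lemma denom_cast (ξ : ℝ) : (1 + (ξ : ℂ) ^ 4) = ((1 + ξ ^ 4 : ℝ) : ℂ) := by push_cast; ring

lemma denom_ne (ξ : ℝ) : (1 + (ξ : ℂ) ^ 4) ≠ 0 := by
  rw [denom_cast]
  exact_mod_cast (denom_pos ξ).ne'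

lemma norm_Fc (x ξ : ℝ) : ‖Fc x ξ‖ = 1 / (1 + ξ ^ 4) := by
  rw [Fc, norm_div, denom_cast, Complex.norm_real, Real.norm_of_nonneg (denom_pos ξ).le]
  congr 1
  rw [show Complex.I * (x : ℂ) * (ξ : ℂ) = ((x * ξ : ℝ) : ℂ) * Complex.I by push_cast; ring]
  rw [Complex.norm_exp_ofReal_mul_I]

lemma continuous_Fc (x : ℝ) : Continuous fun ξ : ℝ => Fc x ξ := by
  apply Continuous.div
  · exact Complex.continuous_exp.comp (by continuity)
  · continuity
  · exact fun ξ => denom_ne ξ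

lemma continuous_Fc' (ξ : ℝ) : Continuous fun x : ℝ => Fc x ξ := by
  apply Continuous.div
  · exact Complex.continuous_exp.comp (by continuity)
  · continuity
  · exact fun x => denom_ne ξ

lemma hasDerivAt_Fc (x ξ : ℝ) :
    HasDerivAt (fun y : ℝ => Fc y ξ) (Complex.I * ξ * Fc x ξ) x := by
  have h0 : HasDerivAt (fun y : ℝ => ((y : ℂ))) 1 x := by
    simpa using (hasDerivAt_id x).ofReal_comp
  have h1 : HasDerivAt (fun y : ℝ => (Complex.I * ξ) * (y : ℂ)) (Complex.I * ξ) x := by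
    simpa using h0.const_mul (Complex.I * (ξ : ℂ))
  have h2 := (h1.cexp).div_const (1 + (ξ : ℂ) ^ 4)
  have hfun : (fun y : ℝ => Fc y ξ)
      = fun y : ℝ => Complex.exp ((Complex.I * ξ) * (y : ℂ)) / (1 + (ξ : ℂ) ^ 4) := by
    funext y; rw [Fc]; ring_nf
  rw [hfun]
  convert h2 using 1
  · rfl
  rw [Fc]; ring_nf


lemma bound_le {ξ : ℝ} (hξ : 1 ≤ ξ) {k : ℕ} (hk : k ≤ 2) :
    ξ ^ k / (1 + ξ ^ 4) ≤ ξ ^ (-2 : ℝ) := by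
  have hξ0 : (0:ℝ) < ξ := lt_of_lt_of_le one_pos hξ
  have hA : ξ ^ (-2 : ℝ) = (ξ ^ 2)⁻¹ := by
    rw [Real.rpow_neg hξ0.le, ← Real.rpow_natCast ξ 2]; norm_num
  rw [hA, div_le_iff₀ (denom_pos ξ), inv_mul_eq_div, le_div_iff₀ (by positivity : (0:ℝ) < ξ ^ 2)]
  calc ξ ^ k * ξ ^ 2 = ξ ^ (k + 2) := (pow_add ξ k 2).symm
    _ ≤ ξ ^ 4 := pow_le_pow_right₀ hξ (by omega)
    _ ≤ 1 + ξ ^ 4 := by linarith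

lemma continuous_bound (k : ℕ) : Continuous fun ξ : ℝ => ξ ^ k / (1 + ξ ^ 4) :=
  (continuous_pow k).div (by continuity) fun ξ => (denom_pos ξ).ne'

lemma integrable_bound (k : ℕ) (hk : k ≤ 2) :
    IntegrableOn (fun ξ : ℝ => ξ ^ k / (1 + ξ ^ 4)) (Ioi 0) := by
  have h1 : IntegrableOn (fun ξ : ℝ => ξ ^ k / (1 + ξ ^ 4)) (Ioc 0 1) :=
    ((continuous_bound k).continuousOn.integrableOn_Icc).mono_set Ioc_subset_Icc_self
  have h2 : IntegrableOn (fun ξ : ℝ => ξ ^ k / (1 + ξ ^ 4)) (Ioi 1) := by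
    apply (integrableOn_Ioi_rpow_of_lt (by norm_num : (-2:ℝ) < -1) one_pos).mono'
      (continuous_bound k).aestronglyMeasurable
    refine (ae_restrict_iff' measurableSet_Ioi).2 (ae_of_all _ fun ξ hξ => ?_)
    have hξ1 : (1:ℝ) ≤ ξ := le_of_lt hξ
    rw [Real.norm_of_nonneg (by positivity)]
    exact bound_le hξ1 hk
  have := h1.union h2
  rwa [Ioc_union_Ioi_eq_Ioi zero_le_one] at this

noncomputable def W1 (x : ℝ) : ℂ := ∫ ξ in Ioi (0:ℝ), (Complex.I * ξ) * Fc x ξ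
noncomputable def W2 (x : ℝ) : ℂ := ∫ ξ in Ioi (0:ℝ), (Complex.I * ξ) ^ 2 * Fc x ξ

lemma norm_mul_Fc (c : ℂ) (x ξ : ℝ) : ‖c * Fc x ξ‖ = ‖c‖ / (1 + ξ ^ 4) := by
  rw [norm_mul, norm_Fc, mul_one_div]

lemma norm_I_mul (ξ : ℝ) (hξ : (0:ℝ) < ξ) : ‖Complex.I * (ξ:ℂ)‖ = ξ := by
  rw [norm_mul, Complex.norm_I, one_mul, Complex.norm_real, Real.norm_of_nonneg hξ.le]

lemma norm_I_mul_sq (ξ : ℝ) : ‖(Complex.I * (ξ:ℂ)) ^ 2‖ = ξ ^ 2 := by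
  rw [norm_pow, norm_mul, Complex.norm_I, one_mul, Complex.norm_real, Real.norm_eq_abs, sq_abs]

lemma continuous_pow_Fc (x : ℝ) (n : ℕ) :
    Continuous fun ξ : ℝ => (Complex.I * ξ) ^ n * Fc x ξ :=
  ((by continuity : Continuous fun ξ : ℝ => (Complex.I * (ξ:ℂ)) ^ n)).mul (continuous_Fc x)

lemma continuous_mul_Fc (x : ℝ) : Continuous fun ξ : ℝ => Complex.I * ξ * Fc x ξ := by
  have := continuous_pow_Fc x 1
  simpa [pow_one] using this

lemma integrableOn_Fc (x : ℝ) : IntegrableOn (fun ξ : ℝ => Fc x ξ) (Ioi 0) := by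
  apply (integrable_bound 0 (by norm_num)).mono' (continuous_Fc x).aestronglyMeasurable
  exact ae_of_all _ fun ξ => by rw [norm_Fc, pow_zero]

lemma hasDerivAt_int_Fc (x : ℝ) :
    HasDerivAt (fun y : ℝ => ∫ ξ in Ioi (0:ℝ), Fc y ξ) (W1 x) x := by
  have := (hasDerivAt_integral_of_dominated_loc_of_deriv_le
    (F := fun y ξ => Fc y ξ) (F' := fun y ξ => (Complex.I * ξ) * Fc y ξ)
    (bound := fun ξ => ξ ^ 1 / (1 + ξ ^ 4)) (x₀ := x)
    (Metric.ball_mem_nhds x one_pos)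
    (Eventually.of_forall fun y => (continuous_Fc y).aestronglyMeasurable)
    (integrableOn_Fc x)
    ((continuous_mul_Fc x).aestronglyMeasurable)
    ?_ (integrable_bound 1 one_le_two) ?_).2
  · exact this
  · refine (ae_restrict_iff' measurableSet_Ioi).2 (ae_of_all _ fun ξ hξ y _ => ?_)
    rw [norm_mul_Fc, norm_I_mul ξ hξ]
    simp [pow_one]
  · exact ae_of_all _ fun ξ y _ => hasDerivAt_Fc y ξ

lemma hasDerivAt_W1 (x : ℝ) : HasDerivAt W1 (W2 x) x := by
  have := (hasDerivAt_integral_of_dominated_loc_of_deriv_le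
    (F := fun y ξ => (Complex.I * ξ) * Fc y ξ)
    (F' := fun y ξ => (Complex.I * ξ) ^ 2 * Fc y ξ)
    (bound := fun ξ => ξ ^ 2 / (1 + ξ ^ 4)) (x₀ := x)
    (Metric.ball_mem_nhds x one_pos)
    (Eventually.of_forall fun y => (continuous_mul_Fc y).aestronglyMeasurable)
    ?_ ((continuous_pow_Fc x 2).aestronglyMeasurable) ?_ (integrable_bound 2 le_rfl) ?_).2
  · exact this
  · apply (integrable_bound 1 one_le_two).mono'
      ((continuous_mul_Fc x).aestronglyMeasurable)
    refine (ae_restrict_iff' measurableSet_Ioi).2 (ae_of_all _ fun ξ hξ => ?_)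
    rw [norm_mul_Fc, norm_I_mul ξ hξ]
    simp [pow_one]
  · refine (ae_restrict_iff' measurableSet_Ioi).2 (ae_of_all _ fun ξ hξ y _ => ?_)
    rw [norm_mul_Fc, norm_I_mul_sq ξ]
  · refine ae_of_all _ fun ξ y _ => ?_
    have := (hasDerivAt_Fc y ξ).const_mul (Complex.I * (ξ:ℂ))
    convert this using 1
    · rfl
    ring


lemma integrableOn_sqFc (x : ℝ) :
    IntegrableOn (fun ξ : ℝ => (Complex.I * ξ) ^ 2 * Fc x ξ) (Ioi 0) := by
  apply (integrable_bound 2 le_rfl).mono' (continuous_pow_Fc x 2).aestronglyMeasurable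
  exact ae_of_all _ fun ξ => by rw [norm_mul_Fc, norm_I_mul_sq]

lemma continuous_W2 : Continuous W2 := by
  apply continuous_of_dominated (bound := fun ξ => ξ ^ 2 / (1 + ξ ^ 4))
  · exact fun x => (continuous_pow_Fc x 2).aestronglyMeasurable
  · exact fun x => ae_of_all _ fun ξ => le_of_eq (by rw [norm_mul_Fc, norm_I_mul_sq])
  · exact integrable_bound 2 le_rfl
  · exact ae_of_all _ fun ξ => by
      have : Continuous fun x : ℝ => Fc x ξ := continuous_Fc' ξ
      exact continuous_const.mul this

noncomputable def J (x : ℝ) : ℝ := ∫ ξ in Ioi (0:ℝ), ξ ^ 2 * Real.sin (x * ξ) / (1 + ξ ^ 4)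

lemma J_zero : J 0 = 0 := by
  simp [J]

lemma norm_Jint_le (x ξ : ℝ) :
    ‖ξ ^ 2 * Real.sin (x * ξ) / (1 + ξ ^ 4)‖ ≤ ξ ^ 2 / (1 + ξ ^ 4) := by
  rw [Real.norm_eq_abs, abs_div, abs_of_pos (denom_pos ξ), abs_mul, abs_pow, sq_abs]
  gcongr
  calc ξ ^ 2 * |Real.sin (x * ξ)| ≤ ξ ^ 2 * 1 :=
        mul_le_mul_of_nonneg_left (abs_le.2 ⟨Real.neg_one_le_sin _, Real.sin_le_one _⟩)
          (by positivity)
    _ = ξ ^ 2 := mul_one _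

lemma continuous_Jint (x : ℝ) : Continuous fun ξ : ℝ => ξ ^ 2 * Real.sin (x * ξ) / (1 + ξ ^ 4) := by
  apply Continuous.div
  · exact (continuous_pow 2).mul (Real.continuous_sin.comp (by continuity))
  · continuity
  · exact fun ξ => (denom_pos ξ).ne'

lemma integrableOn_Jint (x : ℝ) :
    IntegrableOn (fun ξ : ℝ => ξ ^ 2 * Real.sin (x * ξ) / (1 + ξ ^ 4)) (Ioi 0) := by
  apply (integrable_bound 2 le_rfl).mono' (continuous_Jint x).aestronglyMeasurable
  exact ae_of_all _ fun ξ => norm_Jint_le x ξ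

lemma im_sqFc (x ξ : ℝ) :
    ((Complex.I * ξ) ^ 2 * Fc x ξ).im = -(ξ ^ 2 * Real.sin (x * ξ) / (1 + ξ ^ 4)) := by
  have h1 : (Complex.I * (ξ:ℂ)) ^ 2 * Fc x ξ =
      Complex.ofReal (-(ξ ^ 2 * Real.cos (x * ξ) / (1 + ξ ^ 4))) +
      Complex.ofReal (-(ξ ^ 2 * Real.sin (x * ξ) / (1 + ξ ^ 4))) * Complex.I := by
    rw [Fc, show Complex.I * (x:ℂ) * (ξ:ℂ) = ((x * ξ : ℝ) : ℂ) * Complex.I by push_cast; ring,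
      Complex.exp_mul_I, ← Complex.ofReal_cos, ← Complex.ofReal_sin, denom_cast,
      mul_pow, Complex.I_sq]
    have hd : ((1 + ξ ^ 4 : ℝ) : ℂ) ≠ 0 := by exact_mod_cast (denom_pos ξ).ne'
    push_cast
    field_simp
    ring
  rw [h1]
  simp only [Complex.add_im, Complex.mul_im, Complex.I_im, Complex.I_re, Complex.ofReal_im,
    Complex.ofReal_re, mul_one, mul_zero, zero_add, add_zero]

lemma im_W2 (x : ℝ) : (W2 x).im = -(J x) := by
  have h := (Complex.imCLM.integral_comp_comm (integrableOn_sqFc x)).symm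
  simp only [Complex.imCLM_apply] at h
  rw [W2, h, J, ← integral_neg]
  exact setIntegral_congr_fun measurableSet_Ioi fun ξ _ => im_sqFc x ξ


lemma J_lower {x : ℝ} (h0 : 0 < x) (h1 : x < 1) :
    (Real.log (π / (2 * x)) - 2) / π ≤ J x / x := by
  have hπ : (0:ℝ) < π := Real.pi_pos
  have hπ3 : (3:ℝ) < π := Real.pi_gt_three
  set g : ℝ → ℝ := fun ξ => ξ ^ 2 * Real.sin (x * ξ) / (1 + ξ ^ 4) with hg
  set c : ℝ := π / (2 * x) with hc
  have hc1 : 1 < c := by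
    rw [hc, lt_div_iff₀ (by positivity)]
    nlinarith
  have hc0 : (0:ℝ) < c := lt_trans one_pos hc1
  have hxc : x * c = π / 2 := by
    rw [hc]; field_simp
  have hint : IntegrableOn g (Ioi 0) := integrableOn_Jint x
  have hint1 : IntegrableOn g (Ioc 0 c) := hint.mono_set Ioc_subset_Ioi_self
  have hint2 : IntegrableOn g (Ioi c) := hint.mono_set (Ioi_subset_Ioi hc0.le)
  have hnn : ∀ ξ ∈ Ioc (0:ℝ) c, 0 ≤ g ξ := by
    intro ξ hξ
    apply div_nonneg _ (denom_pos ξ).le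
    apply mul_nonneg (by positivity)
    apply Real.sin_nonneg_of_nonneg_of_le_pi (mul_nonneg h0.le hξ.1.le)
    calc x * ξ ≤ x * c := by nlinarith [hξ.2]
      _ = π / 2 := hxc
      _ ≤ π := by linarith
  have hsplit : J x = (∫ ξ in Ioc 0 c, g ξ) + ∫ ξ in Ioi c, g ξ := by
    rw [J, ← Ioc_union_Ioi_eq_Ioi hc0.le,
      setIntegral_union (Ioc_disjoint_Ioi le_rfl) measurableSet_Ioi hint1 hint2]
  -- tail bound
  have htail : -(c⁻¹) ≤ ∫ ξ in Ioi c, g ξ := by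
    have hb : ‖∫ ξ in Ioi c, g ξ‖ ≤ ∫ ξ in Ioi c, ξ ^ (-2:ℝ) := by
      apply norm_integral_le_of_norm_le (integrableOn_Ioi_rpow_of_lt (by norm_num) hc0)
      refine (ae_restrict_iff' measurableSet_Ioi).2 (ae_of_all _ fun ξ hξ => ?_)
      have hξ1 : (1:ℝ) ≤ ξ := le_of_lt (lt_of_le_of_lt hc1.le hξ)
      exact (norm_Jint_le x ξ).trans (bound_le hξ1 le_rfl)
    have hval : ∫ ξ in Ioi c, ξ ^ (-2:ℝ) = c⁻¹ := by
      rw [integral_Ioi_rpow_of_lt (by norm_num) hc0]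
      norm_num
      rw [Real.rpow_neg_one]
    rw [hval, Real.norm_eq_abs] at hb
    linarith [(abs_le.1 hb).1]
  -- main bound
  have hmono : ∀ ξ ∈ Ioc (1:ℝ) c, x / π * ξ⁻¹ ≤ g ξ := by
    intro ξ hξ
    have hξ1 : (1:ℝ) ≤ ξ := hξ.1.le
    have hξ0 : (0:ℝ) < ξ := lt_of_lt_of_le one_pos hξ1
    have hsin : 2 / π * (x * ξ) ≤ Real.sin (x * ξ) := by
      apply Real.mul_le_sin (mul_nonneg h0.le hξ0.le)
      calc x * ξ ≤ x * c := by nlinarith [hξ.2]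
        _ = π / 2 := hxc
    have step1 : x / π * ξ⁻¹ ≤ 2 * x / π * (ξ ^ 3 / (1 + ξ ^ 4)) := by
      rw [mul_comm (x / π) ξ⁻¹, inv_mul_eq_div, mul_div_assoc' (2 * x / π),
        div_le_div_iff₀ hξ0 (denom_pos ξ)]
      have h14 : (1:ℝ) ≤ ξ ^ 4 := by nlinarith [sq_nonneg (ξ ^ 2 - 1), sq_nonneg (ξ - 1)]
      have h4 : 1 + ξ ^ 4 ≤ 2 * ξ ^ 4 := by linarith
      calc x / π * (1 + ξ ^ 4) ≤ x / π * (2 * ξ ^ 4) :=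
            mul_le_mul_of_nonneg_left h4 (by positivity)
        _ = 2 * x / π * ξ ^ 3 * ξ := by ring
    have step2 : 2 * x / π * (ξ ^ 3 / (1 + ξ ^ 4)) ≤ g ξ := by
      rw [hg, mul_div_assoc' (2 * x / π), div_le_div_iff₀ (denom_pos ξ) (denom_pos ξ)]
      have : 2 * x / π * ξ ^ 3 ≤ ξ ^ 2 * Real.sin (x * ξ) := by
        calc 2 * x / π * ξ ^ 3 = ξ ^ 2 * (2 / π * (x * ξ)) := by ring
          _ ≤ ξ ^ 2 * Real.sin (x * ξ) := mul_le_mul_of_nonneg_left hsin (by positivity)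
      nlinarith [denom_pos ξ]
    linarith
  have hIoc1c : IntegrableOn (fun ξ : ℝ => x / π * ξ⁻¹) (Ioc 1 c) := by
    apply ContinuousOn.integrableOn_Icc ?_ |>.mono_set Ioc_subset_Icc_self
    exact continuousOn_const.mul (continuousOn_inv₀.mono fun ξ hξ =>
      ne_of_gt (lt_of_lt_of_le one_pos hξ.1))
  have hmain : x / π * Real.log c ≤ ∫ ξ in Ioc 0 c, g ξ := by
    have step1 : (∫ ξ in Ioc 1 c, g ξ) ≤ ∫ ξ in Ioc 0 c, g ξ := by
      apply setIntegral_mono_set hint1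
      · exact (ae_restrict_iff' measurableSet_Ioc).2 (ae_of_all _ hnn)
      · exact HasSubset.Subset.eventuallyLE (Ioc_subset_Ioc_left zero_le_one)
    have step2 : (∫ ξ in Ioc 1 c, x / π * ξ⁻¹) ≤ ∫ ξ in Ioc 1 c, g ξ :=
      setIntegral_mono_on hIoc1c (hint.mono_set fun ξ hξ => lt_of_lt_of_le one_pos hξ.1.le)
        measurableSet_Ioc hmono
    have step3 : (∫ ξ in Ioc 1 c, x / π * ξ⁻¹) = x / π * Real.log c := by
      rw [MeasureTheory.integral_const_mul]
      congr 1
      rw [← intervalIntegral.integral_of_le hc1.le, integral_inv_of_pos one_pos hc0, div_one]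
    linarith
  have hcinv : c⁻¹ = 2 * x / π := by rw [hc, inv_div]
  have hfinal : x / π * Real.log c - 2 * x / π ≤ J x := by
    rw [hsplit]; rw [hcinv] at htail; linarith
  rw [le_div_iff₀ h0]
  have : (Real.log c - 2) / π * x = x / π * Real.log c - 2 * x / π := by
    field_simp
  rw [this]
  exact hfinal


lemma tendsto_lb : Tendsto (fun x : ℝ => (Real.log (π / (2 * x)) - 2) / π) (𝓝[>] 0) atTop := by
  have hπ : (0:ℝ) < π := Real.pi_pos
  have l1 : Tendsto (fun x : ℝ => π / (2 * x)) (𝓝[>] (0:ℝ)) atTop := by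
    have := (tendsto_inv_nhdsGT_zero (𝕜 := ℝ)).const_mul_atTop (show (0:ℝ) < π / 2 by positivity)
    apply this.congr fun x => by ring
  have l2 : Tendsto (fun x : ℝ => Real.log (π / (2 * x))) (𝓝[>] (0:ℝ)) atTop :=
    Real.tendsto_log_atTop.comp l1
  have l3 : Tendsto (fun x : ℝ => Real.log (π / (2 * x)) - 2) (𝓝[>] (0:ℝ)) atTop :=
    tendsto_atTop_add_const_right _ (-2) l2 |>.congr fun x => by ring
  exact l3.atTop_div_const hπ

lemma W2_im_not_diff : ¬ DifferentiableAt ℝ W2 0 := by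
  intro hdiff
  have hfd : DifferentiableAt ℝ (fun x : ℝ => (W2 x).im) 0 := by
    have := (Complex.imCLM.differentiable.differentiableAt).comp 0 hdiff
    simpa [Function.comp_def] using this
  have htends := hasDerivAt_iff_tendsto_slope.1 hfd.hasDerivAt
  have hmono : 𝓝[>] (0:ℝ) ≤ 𝓝[≠] (0:ℝ) :=
    nhdsWithin_mono 0 fun x (hx : x ∈ Ioi (0:ℝ)) => ne_of_gt hx
  have hnhds := htends.mono_left hmono
  have hBot : Tendsto (slope (fun x : ℝ => (W2 x).im) 0) (𝓝[>] (0:ℝ)) atBot := by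
    apply tendsto_atBot_mono' (𝓝[>] (0:ℝ))
      (f₁ := fun x : ℝ => -((Real.log (π / (2 * x)) - 2) / π))
    · filter_upwards [Ioo_mem_nhdsGT_of_mem (show (0:ℝ) ∈ Ico (0:ℝ) 1 from ⟨le_rfl, one_pos⟩)]
        with x hx
      have h0 : 0 < x := hx.1
      have h1 : x < 1 := hx.2
      rw [slope_def_field, im_W2, im_W2, J_zero]
      have : (-(J x) - -0) / (x - 0) = -(J x / x) := by rw [neg_zero, sub_zero, sub_zero, neg_div]
      rw [this]
      exact neg_le_neg (J_lower h0 h1)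
    · exact tendsto_neg_atTop_atBot.comp tendsto_lb
  exact not_tendsto_atBot_of_tendsto_nhds hnhds hBot


end Stmt14Aux

open Stmt14Aux

/-- Define `v : ℝ → ℂ` by `v(x) = ∫₀^∞ e^{i x ξ} (1 + ξ⁴)^{−1} dξ`. Then `v`
is twice differentiable on `ℝ` with continuous second derivative, but `v''` is not
differentiable at `x = 0`; in particular, `v` is not infinitely differentiable on any open
neighborhood of `0`. -/
theorem stmt_14 (v : ℝ → ℂ)
    (hv : ∀ x : ℝ, v x = ∫ ξ in Set.Ioi (0 : ℝ),
      Complex.exp (Complex.I * (x : ℂ) * (ξ : ℂ)) / (1 + (ξ : ℂ) ^ 4)) :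
    Differentiable ℝ v ∧ Differentiable ℝ (deriv v) ∧ Continuous (deriv (deriv v)) ∧
      ¬ DifferentiableAt ℝ (deriv (deriv v)) 0 ∧
      ∀ U : Set ℝ, IsOpen U → (0 : ℝ) ∈ U → ¬ ContDiffOn ℝ (⊤ : ℕ∞) v U := by
  have hveq : v = fun x => ∫ ξ in Set.Ioi (0:ℝ), Fc x ξ := funext fun x => hv x
  have hd1 : Differentiable ℝ v := by
    rw [hveq]; exact fun x => (hasDerivAt_int_Fc x).differentiableAt
  have hderiv1 : deriv v = W1 := by
    rw [hveq]; funext x; exact (hasDerivAt_int_Fc x).deriv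
  have hd2 : Differentiable ℝ (deriv v) := by
    rw [hderiv1]; exact fun x => (hasDerivAt_W1 x).differentiableAt
  have hderiv2 : deriv (deriv v) = W2 := by
    rw [hderiv1]; funext x; exact (hasDerivAt_W1 x).deriv
  have hnd : ¬ DifferentiableAt ℝ (deriv (deriv v)) 0 := by
    rw [hderiv2]; exact W2_im_not_diff
  refine ⟨hd1, hd2, by rw [hderiv2]; exact continuous_W2, hnd, ?_⟩
  intro U hU h0 hcd
  apply hnd
  have h1 : ContDiffOn ℝ (⊤ : ℕ∞) v U := hcd.of_le (by simp)
  have h2 : ContDiffOn ℝ (⊤ : ℕ∞) (deriv v) U :=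
    h1.deriv_of_isOpen hU (by exact_mod_cast le_top)
  have h3 : ContDiffOn ℝ (⊤ : ℕ∞) (deriv (deriv v)) U :=
    h2.deriv_of_isOpen hU (by exact_mod_cast le_top)
  exact ((h3.differentiableOn (by simp)).differentiableAt (hU.mem_nhds h0))
end

section
/- Let ν ≥ 1 be an integer, K ⊂ ℝ^ν compact, m ∈ ℝ and σ > 0. Let p, q : K × (ℝ^ν ∖ {0}) → ℂ be continuous, positively homogeneous in the second variable of degrees m and m − σ respectively (p(y,λη) = λ^m p(y,η) and q(y,λη) = λ^{m−σ} q(y,η) for λ > 0). Assume that for every (y₀, ω₀) ∈ K × S^{ν−1} with p(y₀,ω₀) = 0 there exist a relatively open neighborhood U of (y₀,ω₀) in K × S^{ν−1} and a constant c > 0 such that for all (y,ω) ∈ U: |q(y,ω)|² ≥ c and −Re( p(y,ω)·conj(q(y,ω)) ) ≤ |p(y,ω)| · √(|q(y,ω)|² − c). Then there exist c' > 0 and R ≥ 1 such that |p(y,η) + q(y,η)| ≥ c' |η|^{m−σ} for all y ∈ K and all η ∈ ℝ^ν with |η| ≥ R. -/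
/-!
Write `η = r • ω` with `r = ‖η‖` and `‖ω‖ = 1`. By homogeneity
`p(y, η) + q(y, η) = r ^ (m - σ) • (r ^ σ • p(y, ω) + q(y, ω))`, so it suffices to bound
`‖t • p(y, ω) + q(y, ω)‖` from below uniformly on `K × S^{ν-1}` for all large `t`.
Near a point where `p ≠ 0` the term `t • p` dominates. Near a zero of `p`, expanding the square
and using the hypothesis on `⟪p, q⟫` gives `‖t • p + q‖² ≥ (t ‖p‖ - √(‖q‖² - c))² + c ≥ c`
for every `t ≥ 0`. Compactness turns these local bounds into a uniform one.
-/

open Filter Topology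
open scoped InnerProductSpace

theorem IsCompact.exists_pos_eventually_forall_le {X ι : Type*} [TopologicalSpace X]
    {S : Set X} (hS : IsCompact S) {l : Filter ι} {F : X → ι → ℝ}
    (hloc : ∀ x ∈ S, ∃ U ∈ 𝓝[S] x, ∃ c > 0, ∀ᶠ t in l, ∀ z ∈ U, c ≤ F z t) :
    ∃ c > 0, ∀ᶠ t in l, ∀ z ∈ S, c ≤ F z t := by
  refine hS.induction_on ⟨1, one_pos, by simp⟩ ?_ ?_ hloc
  · rintro s s' hss' ⟨c, hc, h⟩
    exact ⟨c, hc, h.mono fun t ht z hz => ht z (hss' hz)⟩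
  · rintro s s' ⟨c, hc, h⟩ ⟨c', hc', h'⟩
    refine ⟨min c c', lt_min hc hc', (h.and h').mono ?_⟩
    rintro t ⟨ht, ht'⟩ z (hz | hz)
    · exact (min_le_left _ _).trans (ht z hz)
    · exact (min_le_right _ _).trans (ht' z hz)

section NormSmulAdd

variable {E : Type*}

theorem sqrt_le_norm_smul_add [NormedAddCommGroup E] [InnerProductSpace ℝ E] {a b : E}
    {c t : ℝ} (hc : c ≤ ‖b‖ ^ 2) (hab : -⟪a, b⟫_ℝ ≤ ‖a‖ * √(‖b‖ ^ 2 - c)) (ht : 0 ≤ t) :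
    √c ≤ ‖t • a + b‖ := by
  have hexpand : ‖t • a + b‖ ^ 2 = t ^ 2 * ‖a‖ ^ 2 + 2 * t * ⟪a, b⟫_ℝ + ‖b‖ ^ 2 := by
    rw [norm_add_sq_real, norm_smul, real_inner_smul_left, Real.norm_of_nonneg ht]
    ring
  set s := √(‖b‖ ^ 2 - c)
  have hs : s ^ 2 = ‖b‖ ^ 2 - c := Real.sq_sqrt (by linarith)
  rw [Real.sqrt_le_left (norm_nonneg _), hexpand]
  nlinarith [sq_nonneg (t * ‖a‖ - s), mul_le_mul_of_nonneg_left hab (by positivity : 0 ≤ 2 * t)]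

theorem eventually_le_norm_smul_add [SeminormedAddCommGroup E] [NormedSpace ℝ E]
    {α β δ : ℝ} (hα : 0 < α) :
    ∀ᶠ t : ℝ in atTop, ∀ a b : E, α ≤ ‖a‖ → ‖b‖ ≤ β → δ ≤ ‖t • a + b‖ := by
  filter_upwards [eventually_ge_atTop 0, eventually_ge_atTop ((β + δ) / α)]
    with t ht₀ ht a b ha hb
  have hlarge : β + δ ≤ t * ‖a‖ :=
    ((div_le_iff₀ hα).1 ht).trans (mul_le_mul_of_nonneg_left ha ht₀)
  calc δ ≤ ‖t • a‖ - ‖b‖ := by rw [norm_smul, Real.norm_of_nonneg ht₀]; linarith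
    _ ≤ ‖t • a + b‖ := norm_sub_le_norm_add _ _

theorem IsCompact.exists_pos_eventually_le_norm_smul_add {X : Type*} [TopologicalSpace X]
    [NormedAddCommGroup E] [InnerProductSpace ℝ E] {S : Set X} (hS : IsCompact S)
    {f g : X → E} (hf : ContinuousOn f S) (hg : ContinuousOn g S)
    (hzero : ∀ x ∈ S, f x = 0 → ∃ U ∈ 𝓝[S] x, ∃ c > 0, ∀ z ∈ U,
      c ≤ ‖g z‖ ^ 2 ∧ -⟪f z, g z⟫_ℝ ≤ ‖f z‖ * √(‖g z‖ ^ 2 - c)) :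
    ∃ c > 0, ∀ᶠ t : ℝ in atTop, ∀ z ∈ S, c ≤ ‖t • f z + g z‖ := by
  refine hS.exists_pos_eventually_forall_le fun x hx => ?_
  by_cases hfx : f x = 0
  · obtain ⟨U, hU, c, hc, hcU⟩ := hzero x hx hfx
    refine ⟨U, hU, √c, Real.sqrt_pos.2 hc, ?_⟩
    filter_upwards [eventually_ge_atTop 0] with t ht z hz
    exact sqrt_le_norm_smul_add (hcU z hz).1 (hcU z hz).2 ht
  · have hfx' : 0 < ‖f x‖ := norm_pos_iff.2 hfx
    have hf_near : ∀ᶠ z in 𝓝[S] x, ‖f x‖ / 2 ≤ ‖f z‖ :=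
      (hf x hx).norm.eventually (eventually_ge_nhds (half_lt_self hfx'))
    have hg_near : ∀ᶠ z in 𝓝[S] x, ‖g z‖ ≤ ‖g x‖ + 1 :=
      (hg x hx).norm.eventually (eventually_le_nhds (lt_add_one _))
    refine ⟨_, hf_near.and hg_near, 1, one_pos, ?_⟩
    filter_upwards [eventually_le_norm_smul_add (E := E) (half_pos hfx')] with t ht z hz
    exact ht _ _ hz.1 hz.2

end NormSmulAdd

theorem norm_add_smul_eq_of_homogeneous {E : Type*} [NormedAddCommGroup E] [NormedSpace ℝ E]
    {m σ : ℝ} {f g : E → ℂ}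
    (hf : ∀ η : E, η ≠ 0 → ∀ l : ℝ, 0 < l → f (l • η) = ((l ^ m : ℝ) : ℂ) * f η)
    (hg : ∀ η : E, η ≠ 0 → ∀ l : ℝ, 0 < l → g (l • η) = ((l ^ (m - σ) : ℝ) : ℂ) * g η)
    {ω : E} (hω : ω ≠ 0) {r : ℝ} (hr : 0 < r) :
    ‖f (r • ω) + g (r • ω)‖ = r ^ (m - σ) * ‖r ^ σ • f ω + g ω‖ := by
  have hsplit : r ^ m = r ^ (m - σ) * r ^ σ := by rw [← Real.rpow_add hr, sub_add_cancel]
  have hfactor : ((r ^ m : ℝ) : ℂ) * f ω + ((r ^ (m - σ) : ℝ) : ℂ) * g ω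
      = ((r ^ (m - σ) : ℝ) : ℂ) * (r ^ σ • f ω + g ω) := by
    rw [hsplit, Complex.real_smul]; push_cast; ring
  rw [hf ω hω r hr, hg ω hω r hr, hfactor, norm_mul, Complex.norm_real,
    Real.norm_of_nonneg (Real.rpow_nonneg hr.le _)]

theorem stmt_16_general (ν : ℕ) (K : Set (EuclideanSpace ℝ (Fin ν))) (hK : IsCompact K)
    (m σ : ℝ) (hσ : 0 < σ)
    (p q : EuclideanSpace ℝ (Fin ν) → EuclideanSpace ℝ (Fin ν) → ℂ)
    (hp : ContinuousOn (fun yz : EuclideanSpace ℝ (Fin ν) × EuclideanSpace ℝ (Fin ν) =>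
      p yz.1 yz.2) (K ×ˢ {η | η ≠ 0}))
    (hq : ContinuousOn (fun yz : EuclideanSpace ℝ (Fin ν) × EuclideanSpace ℝ (Fin ν) =>
      q yz.1 yz.2) (K ×ˢ {η | η ≠ 0}))
    (hphom : ∀ y ∈ K, ∀ η : EuclideanSpace ℝ (Fin ν), η ≠ 0 → ∀ l : ℝ, 0 < l →
      p y (l • η) = ((l ^ m : ℝ) : ℂ) * p y η)
    (hqhom : ∀ y ∈ K, ∀ η : EuclideanSpace ℝ (Fin ν), η ≠ 0 → ∀ l : ℝ, 0 < l →
      q y (l • η) = ((l ^ (m - σ) : ℝ) : ℂ) * q y η)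
    (hmain : ∀ y₀ ∈ K, ∀ ω₀ : EuclideanSpace ℝ (Fin ν), ‖ω₀‖ = 1 → p y₀ ω₀ = 0 →
      ∃ V : Set (EuclideanSpace ℝ (Fin ν) × EuclideanSpace ℝ (Fin ν)),
        IsOpen V ∧ (y₀, ω₀) ∈ V ∧ ∃ c > (0 : ℝ),
          ∀ y ∈ K, ∀ ω : EuclideanSpace ℝ (Fin ν), ‖ω‖ = 1 → (y, ω) ∈ V →
            c ≤ ‖q y ω‖ ^ 2 ∧
            -((p y ω * (starRingEnd ℂ) (q y ω)).re)
              ≤ ‖p y ω‖ * Real.sqrt (‖q y ω‖ ^ 2 - c)) :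
    ∃ c' > (0 : ℝ), ∃ R : ℝ, 1 ≤ R ∧ ∀ y ∈ K, ∀ η : EuclideanSpace ℝ (Fin ν), R ≤ ‖η‖ →
      c' * ‖η‖ ^ (m - σ) ≤ ‖p y η + q y η‖ := by
  set S := K ×ˢ Metric.sphere (0 : EuclideanSpace ℝ (Fin ν)) 1
  have hS : S ⊆ K ×ˢ {η | η ≠ 0} :=
    Set.prod_mono subset_rfl fun ω hω => ne_zero_of_mem_unit_sphere ⟨ω, hω⟩
  have hzero : ∀ x ∈ S, p x.1 x.2 = 0 → ∃ U ∈ 𝓝[S] x, ∃ c > 0, ∀ z ∈ U,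
      c ≤ ‖q z.1 z.2‖ ^ 2 ∧ -⟪p z.1 z.2, q z.1 z.2⟫_ℝ ≤ ‖p z.1 z.2‖ * √(‖q z.1 z.2‖ ^ 2 - c) := by
    rintro ⟨y₀, ω₀⟩ ⟨hy₀, hω₀⟩ h0
    obtain ⟨V, hV, hxV, c, hc, hcV⟩ := hmain y₀ hy₀ ω₀ (mem_sphere_zero_iff_norm.1 hω₀) h0
    refine ⟨S ∩ V, inter_mem_nhdsWithin S (hV.mem_nhds hxV), c, hc, ?_⟩
    rintro ⟨y, ω⟩ ⟨⟨hy, hω⟩, hωV⟩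
    rw [real_inner_comm, Complex.inner]
    exact hcV y hy ω (mem_sphere_zero_iff_norm.1 hω) hωV
  obtain ⟨c, hc, hT⟩ := (hK.prod (isCompact_sphere 0 1)).exists_pos_eventually_le_norm_smul_add
    (hp.mono hS) (hq.mono hS) hzero
  obtain ⟨R, hR⟩ := eventually_atTop.1 ((tendsto_rpow_atTop hσ).eventually hT)
  refine ⟨c, hc, max 1 R, le_max_left _ _, fun y hy η hη => ?_⟩
  have hη₀ : 0 < ‖η‖ := one_pos.trans_le ((le_max_left _ _).trans hη)
  have hω : ‖η‖⁻¹ • η ≠ 0 := smul_ne_zero (inv_ne_zero hη₀.ne') (norm_pos_iff.1 hη₀)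
  have hscale := norm_add_smul_eq_of_homogeneous (hphom y hy) (hqhom y hy) hω hη₀
  rw [smul_inv_smul₀ hη₀.ne'] at hscale
  rw [hscale, mul_comm]
  gcongr
  exact hR _ (le_of_max_le_right hη) (y, _) ⟨hy, by simp [norm_smul, hη₀.ne']⟩

/-- Let `ν ≥ 1` be an integer, `K ⊂ ℝ^ν` compact, `m ∈ ℝ` and `σ > 0`. Let
`p, q` be continuous on `K × (ℝ^ν ∖ {0})`, positively homogeneous in the second variable of
degrees `m` and `m − σ` respectively. Assume that for every `(y₀, ω₀) ∈ K × S^{ν−1}` with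
`p(y₀,ω₀) = 0` there exist a relatively open neighborhood `U` of `(y₀,ω₀)` in `K × S^{ν−1}`
and a constant `c > 0` such that for all `(y,ω) ∈ U`: `|q(y,ω)|² ≥ c` and
`−Re( p(y,ω)·conj(q(y,ω)) ) ≤ |p(y,ω)| · √(|q(y,ω)|² − c)`. Then there exist `c' > 0` and
`R ≥ 1` such that `|p(y,η) + q(y,η)| ≥ c' |η|^(m−σ)` for all `y ∈ K` and all `η` with
`|η| ≥ R`. -/
theorem stmt_16 (ν : ℕ) (hν : 1 ≤ ν) (K : Set (EuclideanSpace ℝ (Fin ν))) (hK : IsCompact K)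
    (m σ : ℝ) (hσ : 0 < σ)
    (p q : EuclideanSpace ℝ (Fin ν) → EuclideanSpace ℝ (Fin ν) → ℂ)
    (hp : ContinuousOn (fun yz : EuclideanSpace ℝ (Fin ν) × EuclideanSpace ℝ (Fin ν) =>
      p yz.1 yz.2) (K ×ˢ {η | η ≠ 0}))
    (hq : ContinuousOn (fun yz : EuclideanSpace ℝ (Fin ν) × EuclideanSpace ℝ (Fin ν) =>
      q yz.1 yz.2) (K ×ˢ {η | η ≠ 0}))
    (hphom : ∀ y ∈ K, ∀ η : EuclideanSpace ℝ (Fin ν), η ≠ 0 → ∀ l : ℝ, 0 < l →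
      p y (l • η) = ((l ^ m : ℝ) : ℂ) * p y η)
    (hqhom : ∀ y ∈ K, ∀ η : EuclideanSpace ℝ (Fin ν), η ≠ 0 → ∀ l : ℝ, 0 < l →
      q y (l • η) = ((l ^ (m - σ) : ℝ) : ℂ) * q y η)
    (hmain : ∀ y₀ ∈ K, ∀ ω₀ : EuclideanSpace ℝ (Fin ν), ‖ω₀‖ = 1 → p y₀ ω₀ = 0 →
      ∃ V : Set (EuclideanSpace ℝ (Fin ν) × EuclideanSpace ℝ (Fin ν)),
        IsOpen V ∧ (y₀, ω₀) ∈ V ∧ ∃ c > (0 : ℝ),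
          ∀ y ∈ K, ∀ ω : EuclideanSpace ℝ (Fin ν), ‖ω‖ = 1 → (y, ω) ∈ V →
            c ≤ ‖q y ω‖ ^ 2 ∧
            -((p y ω * (starRingEnd ℂ) (q y ω)).re)
              ≤ ‖p y ω‖ * Real.sqrt (‖q y ω‖ ^ 2 - c)) :
    ∃ c' > (0 : ℝ), ∃ R : ℝ, 1 ≤ R ∧ ∀ y ∈ K, ∀ η : EuclideanSpace ℝ (Fin ν), R ≤ ‖η‖ →
      c' * ‖η‖ ^ (m - σ) ≤ ‖p y η + q y η‖ :=
  stmt_16_general ν K hK m σ hσ p q hp hq hphom hqhom hmain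
end

section
/- Let h ≥ 1 and n ≥ 2 be integers and m, k ∈ ℝ. Write points of ℝⁿ × ℝⁿ as (x,ξ) with x = (x₁,x'), ξ = (ξ₁,ξ'). Let a : ℝⁿ × ℝⁿ → ℂ be smooth and suppose that for every compact K ⊂ ℝⁿ and all multi-indices α, γ ∈ ℕ and β, δ ∈ ℕ^{n−1} there is C with |∂_{x₁}^α ∂_{x'}^β ∂_{ξ₁}^γ ∂_{ξ'}^δ a(x,ξ)| ≤ C |ξ|^{m − γ − |δ|} ( |ξ₁|/|ξ| + |x₁|^h + |ξ|^{−h/(h+1)} )^{k − α/h − γ} for x ∈ K, |ξ| ≥ 1. Then, with m̃ = m + (h/(h+1))·max(0,−k), for every compact K and all multi-indices there is C' such that |∂_{x₁}^α ∂_{x'}^β ∂_{ξ₁}^γ ∂_{ξ'}^δ a(x,ξ)| ≤ C' (1 + |ξ|)^{ m̃ − (γ + |δ|)/(h+1) + (α + |β|)/(h+1) } for all x ∈ K and |ξ| ≥ 1. -/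
/-- The space of symbols `a(x₁, x', ξ₁, ξ')` with `x', ξ' ∈ ℝ^ν`. -/
abbrev Symb (ν : ℕ) := ℝ → (Fin ν → ℝ) → ℝ → (Fin ν → ℝ) → ℂ

/-- Partial derivative `∂_{x₁}`. -/
noncomputable def pdX1 {ν : ℕ} (f : Symb ν) : Symb ν :=
  fun x1 x' ξ1 ξ' => deriv (fun s => f s x' ξ1 ξ') x1

/-- Partial derivative `∂_{ξ₁}`. -/
noncomputable def pdXi1 {ν : ℕ} (f : Symb ν) : Symb ν :=
  fun x1 x' ξ1 ξ' => deriv (fun s => f x1 x' s ξ') ξ1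

/-- Partial derivative `∂_{x'_i}`. -/
noncomputable def pdXp {ν : ℕ} (i : Fin ν) (f : Symb ν) : Symb ν :=
  fun x1 x' ξ1 ξ' => deriv (fun s => f x1 (Function.update x' i s) ξ1 ξ') (x' i)

/-- Partial derivative `∂_{ξ'_i}`. -/
noncomputable def pdXip {ν : ℕ} (i : Fin ν) (f : Symb ν) : Symb ν :=
  fun x1 x' ξ1 ξ' => deriv (fun s => f x1 x' ξ1 (Function.update ξ' i s)) (ξ' i)

/-- Multi-index derivative `∂_{x'}^β`. -/
noncomputable def pdXpPow {ν : ℕ} (β : Fin ν → ℕ) (f : Symb ν) : Symb ν :=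
  (List.finRange ν).foldr (fun i g => (pdXp i)^[β i] g) f

/-- Multi-index derivative `∂_{ξ'}^δ`. -/
noncomputable def pdXipPow {ν : ℕ} (δ : Fin ν → ℕ) (f : Symb ν) : Symb ν :=
  (List.finRange ν).foldr (fun i g => (pdXip i)^[δ i] g) f

/-- The mixed derivative `∂_{x₁}^α ∂_{x'}^β ∂_{ξ₁}^γ ∂_{ξ'}^δ`. -/
noncomputable def mixedDeriv {ν : ℕ} (α : ℕ) (β : Fin ν → ℕ) (γ : ℕ) (δ : Fin ν → ℕ)
    (f : Symb ν) : Symb ν :=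
  (pdX1)^[α] (pdXpPow β ((pdXi1)^[γ] (pdXipPow δ f)))

/-- The Euclidean norm `|ξ|` of `ξ = (ξ₁, ξ')`. -/
noncomputable def xiNorm {ν : ℕ} (ξ1 : ℝ) (ξ' : Fin ν → ℝ) : ℝ :=
  Real.sqrt (ξ1 ^ 2 + ∑ i, (ξ' i) ^ 2)

/-- The anisotropic symbol estimates defining the class `S_h^{m,k}` (with constants locally
uniform in `x`). -/
def SymbEst {ν : ℕ} (h : ℕ) (m k : ℝ) (a : Symb ν) : Prop :=
  ∀ K : Set (ℝ × (Fin ν → ℝ)), IsCompact K →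
    ∀ (α γ : ℕ) (β δ : Fin ν → ℕ), ∃ C : ℝ,
      ∀ (x1 : ℝ) (x' : Fin ν → ℝ) (ξ1 : ℝ) (ξ' : Fin ν → ℝ),
        (x1, x') ∈ K → 1 ≤ xiNorm ξ1 ξ' →
        ‖mixedDeriv α β γ δ a x1 x' ξ1 ξ'‖ ≤
          C * xiNorm ξ1 ξ' ^ (m - γ - ∑ i, (δ i : ℝ)) *
            (|ξ1| / xiNorm ξ1 ξ' + |x1| ^ h
              + xiNorm ξ1 ξ' ^ (-(h : ℝ) / ((h : ℝ) + 1))) ^ (k - (α : ℝ) / h - γ)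

lemma aux_pow_bound {t p : ℝ} (ht : 1 ≤ t) : t ^ p ≤ 2 ^ |p| * (1 + t) ^ p := by
  have ht0 : (0:ℝ) < t := lt_of_lt_of_le one_pos ht
  have h1t : (0:ℝ) < 1 + t := by linarith
  rcases le_or_gt 0 p with hp | hp
  · calc t ^ p ≤ (1 + t) ^ p := Real.rpow_le_rpow ht0.le (by linarith) hp
      _ ≤ 2 ^ |p| * (1 + t) ^ p := by
          have : (1:ℝ) ≤ 2 ^ |p| := Real.one_le_rpow (by norm_num) (abs_nonneg p)
          nlinarith [Real.rpow_nonneg h1t.le p]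
  · have hhalf : (0:ℝ) < (1 + t) / 2 := by linarith
    have hle : (1 + t) / 2 ≤ t := by linarith
    have h2 : t ^ p ≤ ((1 + t) / 2) ^ p :=
      Real.rpow_le_rpow_of_nonpos hhalf hle hp.le
    have h3 : ((1 + t) / 2) ^ p = (1 + t) ^ p / 2 ^ p :=
      Real.div_rpow h1t.le (by norm_num : (0:ℝ) ≤ 2) p
    have h4 : |p| = -p := abs_of_neg hp
    rw [h4, Real.rpow_neg (by norm_num : (0:ℝ) ≤ 2)]
    rw [h3, div_eq_mul_inv, mul_comm ((1+t)^p)] at h2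
    exact h2

set_option maxHeartbeats 2000000 in
/-- Let `h ≥ 1`, `n ≥ 2` and `m, k ∈ ℝ`. If a smooth symbol `a` on `ℝⁿ × ℝⁿ`
satisfies the `S_h^{m,k}` estimates, then, with `m̃ = m + (h/(h+1))·max(0,−k)`, it satisfies
the Hörmander `S^{m̃}_{ρ,δ}` estimates with `ρ = δ = 1/(h+1)`:
`|∂_{x₁}^α ∂_{x'}^β ∂_{ξ₁}^γ ∂_{ξ'}^δ a(x,ξ)| ≤ C' (1+|ξ|)^{m̃ − (γ+|δ|)/(h+1) + (α+|β|)/(h+1)}`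
for `x` in a compact set and `|ξ| ≥ 1`. -/
theorem stmt_19 (h n : ℕ) (hh : 1 ≤ h) (hn : 2 ≤ n) (m k : ℝ)
    (a : Symb (n - 1))
    (hsmooth : ContDiff ℝ (⊤ : ℕ∞) (fun p : ℝ × (Fin (n - 1) → ℝ) × ℝ × (Fin (n - 1) → ℝ) =>
      a p.1 p.2.1 p.2.2.1 p.2.2.2))
    (ha : SymbEst h m k a) :
    ∀ K : Set (ℝ × (Fin (n - 1) → ℝ)), IsCompact K →
      ∀ (α γ : ℕ) (β δ : Fin (n - 1) → ℕ), ∃ C' : ℝ,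
        ∀ (x1 : ℝ) (x' : Fin (n - 1) → ℝ) (ξ1 : ℝ) (ξ' : Fin (n - 1) → ℝ),
          (x1, x') ∈ K → 1 ≤ xiNorm ξ1 ξ' →
          ‖mixedDeriv α β γ δ a x1 x' ξ1 ξ'‖ ≤
            C' * (1 + xiNorm ξ1 ξ') ^
              ((m + ((h : ℝ) / ((h : ℝ) + 1)) * max 0 (-k))
                - ((γ : ℝ) + ∑ i, (δ i : ℝ)) / ((h : ℝ) + 1)
                + ((α : ℝ) + ∑ i, (β i : ℝ)) / ((h : ℝ) + 1)) := by
  intro K hK α γ β δ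
  obtain ⟨C, hC⟩ := ha K hK α γ β δ
  obtain ⟨R0, hR0⟩ := hK.isBounded.subset_closedBall 0
  set R : ℝ := max R0 0 with hRdef
  have hRnn : 0 ≤ R := le_max_right _ _
  set H : ℝ := (h : ℝ) with hHdef
  have hH1 : (1:ℝ) ≤ H := by rw [hHdef]; exact_mod_cast hh
  have hH0 : (0:ℝ) < H := by linarith
  have hH10 : (0:ℝ) < H + 1 := by linarith
  set D : ℝ := ∑ i, (δ i : ℝ) with hDdef
  set B : ℝ := ∑ i, (β i : ℝ) with hBdef
  have hD : 0 ≤ D := Finset.sum_nonneg fun i _ => Nat.cast_nonneg _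
  have hB : 0 ≤ B := Finset.sum_nonneg fun i _ => Nat.cast_nonneg _
  set e : ℝ := k - (α : ℝ) / H - γ with hedef
  set p1 : ℝ := m - γ - D with hp1def
  set p2 : ℝ := p1 + (-H / (H + 1)) * e with hp2def
  set Q : ℝ := (m + H / (H + 1) * max 0 (-k)) - ((γ:ℝ) + D) / (H + 1) + ((α:ℝ) + B) / (H + 1)
    with hQdef
  set M : ℝ := 2 + R ^ h with hMdef
  have hM0 : (0:ℝ) < M := by positivity
  have hmaxk : -k ≤ max 0 (-k) := le_max_right _ _
  have hmaxk0 : (0:ℝ) ≤ max 0 (-k) := le_max_left _ _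
  have hγD : ((γ:ℝ) + D) / (H + 1) ≤ (γ:ℝ) + D :=
    div_le_self (by positivity) (by linarith)
  have hαB : (0:ℝ) ≤ ((α:ℝ) + B) / (H + 1) := by positivity
  have hp1Q : p1 ≤ Q := by
    rw [hp1def, hQdef]
    have h1 : 0 ≤ H / (H + 1) * max 0 (-k) := by positivity
    linarith
  have hp2Q : p2 ≤ Q := by
    have h2 : p2 = m - (γ:ℝ) - D + ((α:ℝ) + H * γ - H * k) / (H + 1) := by
      rw [hp2def, hp1def, hedef]
      field_simp
      ring
    have h3 : Q = m + (H * max 0 (-k) - ((γ:ℝ) + D) + ((α:ℝ) + B)) / (H + 1) := by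
      rw [hQdef]; field_simp; ring
    rw [h2, h3]
    have h4 : m - (γ:ℝ) - D + ((α:ℝ) + H * γ - H * k) / (H + 1)
        = m + ((α:ℝ) + H * γ - H * k - ((γ:ℝ) + D) * (H + 1)) / (H + 1) := by
      field_simp; ring
    rw [h4]
    have h5 : H * (-k) ≤ H * max 0 (-k) := mul_le_mul_of_nonneg_left hmaxk hH0.le
    have h6 : 0 ≤ H * D := mul_nonneg hH0.le hD
    have h7 : (α:ℝ) + H * γ - H * k - ((γ:ℝ) + D) * (H + 1)
        ≤ H * max 0 (-k) - ((γ:ℝ) + D) + ((α:ℝ) + B) := by nlinarith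
    gcongr
  refine ⟨|C| * max (M ^ e) 1 * 2 ^ |p1| + |C| * 2 ^ |p2|, ?_⟩
  intro x1 x' ξ1 ξ' hxK ht1
  have hbound := hC x1 x' ξ1 ξ' hxK ht1
  set t : ℝ := xiNorm ξ1 ξ' with htdef
  have ht0 : (0:ℝ) < t := lt_of_lt_of_le one_pos ht1
  have h1t1 : (1:ℝ) ≤ 1 + t := by linarith
  have h1t0 : (0:ℝ) < 1 + t := by linarith
  -- basic facts about θ
  have hξ1 : |ξ1| ≤ t := by
    rw [htdef]
    unfold xiNorm
    rw [← Real.sqrt_sq_eq_abs]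
    exact Real.sqrt_le_sqrt
      (le_add_of_nonneg_right (Finset.sum_nonneg fun i _ => sq_nonneg _))
  have hfrac : |ξ1| / t ≤ 1 := (div_le_one ht0).mpr hξ1
  have hx1R : |x1| ≤ R := by
    have h1 : (x1, x') ∈ Metric.closedBall (0 : ℝ × (Fin (n-1) → ℝ)) R0 := hR0 hxK
    have h2 : ‖(x1, x')‖ ≤ R0 := by
      simpa [Metric.mem_closedBall, dist_zero_right] using h1
    have h3 : |x1| ≤ ‖(x1, x')‖ := norm_fst_le (x1, x')
    exact le_trans (le_trans h3 h2) (le_max_left _ _)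
  have hx1h : |x1| ^ h ≤ R ^ h := pow_le_pow_left₀ (abs_nonneg _) hx1R h
  have hrp1 : t ^ (-H / (H + 1)) ≤ 1 :=
    Real.rpow_le_one_of_one_le_of_nonpos ht1 (by
      apply div_nonpos_of_nonpos_of_nonneg <;> linarith)
  set θ : ℝ := |ξ1| / t + |x1| ^ h + t ^ (-H / (H + 1)) with hθdef
  have hθM : θ ≤ M := by rw [hθdef, hMdef]; linarith
  have hθlb : t ^ (-H / (H + 1)) ≤ θ := by
    rw [hθdef]
    have : (0:ℝ) ≤ |ξ1| / t := by positivity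
    have : (0:ℝ) ≤ |x1| ^ h := by positivity
    linarith
  have hθpos : (0:ℝ) < t ^ (-H / (H + 1)) := Real.rpow_pos_of_pos ht0 _
  have hθ0 : (0:ℝ) < θ := lt_of_lt_of_le hθpos hθlb
  -- the hypothesis bound
  have hbound' : ‖mixedDeriv α β γ δ a x1 x' ξ1 ξ'‖ ≤ |C| * t ^ p1 * θ ^ e := by
    refine le_trans hbound ?_
    exact mul_le_mul_of_nonneg_right
      (mul_le_mul_of_nonneg_right (le_abs_self C) (Real.rpow_nonneg ht0.le p1))
      (Real.rpow_nonneg hθ0.le e)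
  have hQnn : (0:ℝ) ≤ (1 + t) ^ Q := Real.rpow_nonneg h1t0.le Q
  rcases le_or_gt 0 e with hcase | hcase
  · -- e ≥ 0 : bound θ^e by M^e
    have hθe : θ ^ e ≤ max (M ^ e) 1 :=
      le_trans (Real.rpow_le_rpow hθ0.le hθM hcase) (le_max_left _ _)
    have htp1 : t ^ p1 ≤ 2 ^ |p1| * (1 + t) ^ Q := by
      refine le_trans (aux_pow_bound ht1) ?_
      have := Real.rpow_le_rpow_of_exponent_le h1t1 hp1Q
      have h2p : (0:ℝ) ≤ (2:ℝ) ^ |p1| := Real.rpow_nonneg (by norm_num) _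
      exact mul_le_mul_of_nonneg_left this h2p
    calc ‖mixedDeriv α β γ δ a x1 x' ξ1 ξ'‖ ≤ |C| * t ^ p1 * θ ^ e := hbound'
      _ ≤ |C| * (2 ^ |p1| * (1 + t) ^ Q) * max (M ^ e) 1 := by
          gcongr <;> positivity
      _ = |C| * max (M ^ e) 1 * 2 ^ |p1| * (1 + t) ^ Q := by ring
      _ ≤ (|C| * max (M ^ e) 1 * 2 ^ |p1| + |C| * 2 ^ |p2|) * (1 + t) ^ Q := by
          have h9 : (0:ℝ) ≤ |C| * 2 ^ |p2| :=
            mul_nonneg (abs_nonneg C) (Real.rpow_nonneg (by norm_num) _)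
          exact mul_le_mul_of_nonneg_right (le_add_of_nonneg_right h9) hQnn
  · -- e < 0 : bound θ^e by (t^{-H/(H+1)})^e
    have hθe : θ ^ e ≤ t ^ ((-H / (H + 1)) * e) := by
      rw [Real.rpow_mul ht0.le]
      exact Real.rpow_le_rpow_of_nonpos hθpos hθlb hcase.le
    have hcomb : t ^ p1 * θ ^ e ≤ t ^ p2 := by
      have h1 : t ^ p1 * θ ^ e ≤ t ^ p1 * t ^ ((-H / (H + 1)) * e) :=
        mul_le_mul_of_nonneg_left hθe (Real.rpow_nonneg ht0.le p1)
      rw [← Real.rpow_add ht0] at h1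
      rw [hp2def]
      exact h1
    have htp2 : t ^ p2 ≤ 2 ^ |p2| * (1 + t) ^ Q := by
      refine le_trans (aux_pow_bound ht1) ?_
      have := Real.rpow_le_rpow_of_exponent_le h1t1 hp2Q
      have h2p : (0:ℝ) ≤ (2:ℝ) ^ |p2| := Real.rpow_nonneg (by norm_num) _
      exact mul_le_mul_of_nonneg_left this h2p
    calc ‖mixedDeriv α β γ δ a x1 x' ξ1 ξ'‖ ≤ |C| * t ^ p1 * θ ^ e := hbound'
      _ = |C| * (t ^ p1 * θ ^ e) := by ring
      _ ≤ |C| * (2 ^ |p2| * (1 + t) ^ Q) := by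
          refine mul_le_mul_of_nonneg_left (le_trans hcomb htp2) (abs_nonneg C)
      _ = |C| * 2 ^ |p2| * (1 + t) ^ Q := by ring
      _ ≤ (|C| * max (M ^ e) 1 * 2 ^ |p1| + |C| * 2 ^ |p2|) * (1 + t) ^ Q := by
          have h9 : (0:ℝ) ≤ |C| * max (M ^ e) 1 * 2 ^ |p1| :=
            mul_nonneg (mul_nonneg (abs_nonneg C) (le_max_of_le_right zero_le_one))
              (Real.rpow_nonneg (by norm_num) _)
          exact mul_le_mul_of_nonneg_right (le_add_of_nonneg_left h9) hQnn
end
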